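/- arXiv:1710.02906 — 6 statements merged into one kernel-verified Lean document; each statement's English description precedes it below -/
import Mathlib

section
/- If a graph G with at least two vertices has a set-sequential labeling in F_2^n, then the sum of the labels of the vertices of even degree is the zero vector. -/
/-!
Every nonzero vector of `F_2^n` labels exactly one vertex or edge, so all labels together sum
to the sum of all vectors of `F_2^n`, which vanishes once `n ≥ 2`; and `n ≥ 2` because two
distinct vertices carry distinct nonzero labels. On the other hand a vertex label is counted
once for the vertex and once for each incident edge, `deg v + 1` times in all, which in
characteristic 2 leaves exactly the labels of the vertices of even degree.
-/

open Finset

theorem Fintype.sum_pi_eq_zero_of_charTwo {K ι : Type*} [Ring K] [CharP K 2] [Fintype K]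
    [Fintype ι] [DecidableEq ι] [Nontrivial ι] : ∑ x : ι → K, x = 0 := by
  have : Nontrivial K := CharP.nontrivial_of_char_ne_one (v := 2) (by norm_num)
  funext i
  obtain ⟨j, hji⟩ := exists_ne i
  rw [Finset.sum_apply]
  refine sum_involution (fun x _ => x + Pi.single j 1) (fun x _ => ?_) (fun x _ _ => ?_)
    (fun _ _ => mem_univ _) (fun x _ => ?_)
  · simp [hji.symm, CharTwo.add_self_eq_zero]
  · simp
  · rw [add_assoc, CharTwo.add_self_eq_zero, add_zero]

theorem ZMod.nontrivial_of_pi_ne_of_ne_zero {ι : Type*} {x y : ι → ZMod 2} (hx : x ≠ 0)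
    (hy : y ≠ 0) (hxy : x ≠ y) : Nontrivial ι := by
  by_contra hι
  rw [not_nontrivial_iff_subsingleton] at hι
  refine hxy (funext fun k => ?_)
  have hx' : x k ≠ 0 := fun h => hx (funext fun i => Subsingleton.elim i k ▸ h)
  have hy' : y k ≠ 0 := fun h => hy (funext fun i => Subsingleton.elim i k ▸ h)
  have two_nonzero_eq : ∀ a b : ZMod 2, a ≠ 0 → b ≠ 0 → a = b := by decide
  exact two_nonzero_eq _ _ hx' hy'

theorem Fintype.sum_eq_sum_univ_of_existsUnique {α M : Type*} [Fintype α] [Fintype M]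
    [AddCommMonoid M] [DecidableEq M] (f : α → M) (hf : ∀ x ≠ 0, ∃! a, f a = x) :
    ∑ a, f a = ∑ x, x := by
  calc ∑ a, f a = ∑ x, ∑ a with f a = x, x := (Finset.sum_fiberwise' univ f id).symm
    _ = ∑ x, x := Finset.sum_congr rfl fun x _ => ?_
  rw [sum_const]
  obtain rfl | hx := eq_or_ne x 0
  · exact smul_zero _
  · rw [(Fintype.existsUnique_iff_card_one _).1 (hf x hx), one_smul]

namespace SimpleGraph

variable {V M : Type*} [Fintype V] [DecidableEq V] (G : SimpleGraph V) [DecidableRel G.Adj]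
  [AddCommMonoid M]

theorem sum_darts_fst (f : V → M) : ∑ d : G.Dart, f d.fst = ∑ v, G.degree v • f v := by
  rw [← sum_fiberwise' univ (fun d : G.Dart => d.fst) f]
  exact sum_congr rfl fun v _ => by rw [sum_const, dart_fst_fiber_card_eq_degree]

theorem sum_darts_fst_eq_sum_edgeFinset (f : V → M) :
    ∑ d : G.Dart, f d.fst =
      ∑ e ∈ G.edgeFinset, Sym2.lift ⟨fun a b => f a + f b, fun _ _ => add_comm _ _⟩ e := by
  rw [← sum_fiberwise_of_maps_to (g := Dart.edge) (t := G.edgeFinset)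
    (fun d _ => mem_edgeFinset.2 d.edge_mem)]
  refine sum_congr rfl fun e he => ?_
  induction e using Sym2.ind with
  | h a b =>
    let d : G.Dart := ⟨(a, b), mem_edgeFinset.1 he⟩
    rw [show ({d' | d'.edge = s(a, b)} : Finset G.Dart) = {d, d.symm} from d.edge_fiber,
      sum_pair d.symm_ne.symm]
    rfl

theorem sum_edgeFinset_lift_add (f : V → M) :
    ∑ e ∈ G.edgeFinset, Sym2.lift ⟨fun a b => f a + f b, fun _ _ => add_comm _ _⟩ e =
      ∑ v, G.degree v • f v := by
  rw [← sum_darts_fst_eq_sum_edgeFinset, sum_darts_fst]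

end SimpleGraph

theorem nsmul_eq_ite_even {M : Type*} [AddCommGroup M] [Module (ZMod 2) M] (k : ℕ) (x : M) :
    k • x = if Even k then 0 else x := by
  rw [← Nat.cast_smul_eq_nsmul (ZMod 2)]
  split_ifs with hk
  · rw [hk.natCast_zmod_two, zero_smul]
  · rw [(Nat.not_even_iff_odd.1 hk).natCast_zmod_two, one_smul]

/-- If a graph `G` with at least two vertices has a set-sequential labeling in `F_2^n`,
then the sum of the labels of the vertices of even degree is zero. -/
theorem sum_even_degree_labels_eq_zero {V : Type*} [Fintype V] [DecidableEq V]
    (G : SimpleGraph V) [DecidableRel G.Adj] (n : ℕ)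
    (hV : 2 ≤ Fintype.card V)
    (ℓ : V → (Fin n → ZMod 2))
    (hinj : Function.Injective ℓ) (hnz : ∀ v, ℓ v ≠ 0)
    (hbij : ∀ x : Fin n → ZMod 2, x ≠ 0 →
      ∃! s : V ⊕ G.edgeFinset,
        Sum.elim ℓ
          (fun e => Sym2.lift ⟨fun a b => ℓ a + ℓ b, fun a b => add_comm _ _⟩ (e : Sym2 V)) s
          = x) :
    ∑ v ∈ Finset.univ.filter (fun v => Even (G.degree v)), ℓ v = 0 := by
  obtain ⟨v, w, hvw⟩ := Fintype.one_lt_card_iff_nontrivial.1 hV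
  have : Nontrivial (Fin n) :=
    ZMod.nontrivial_of_pi_ne_of_ne_zero (hnz v) (hnz w) (hinj.ne hvw)
  calc ∑ v with Even (G.degree v), ℓ v = ∑ v, (G.degree v + 1) • ℓ v := by
        simp only [sum_filter, nsmul_eq_ite_even, Nat.even_add_one, ite_not]
    _ = ∑ v, ℓ v +
          ∑ e ∈ G.edgeFinset, Sym2.lift ⟨fun a b => ℓ a + ℓ b, fun _ _ => add_comm _ _⟩ e := by
        simp only [G.sum_edgeFinset_lift_add, ← sum_add_distrib, succ_nsmul']
    _ = ∑ s : V ⊕ G.edgeFinset,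
          Sum.elim ℓ (fun e => Sym2.lift ⟨fun a b => ℓ a + ℓ b, fun _ _ => add_comm _ _⟩ (e : Sym2 V))
            s := by
        -- `s` is coerced into `V ⊕ Sym2 V` summandwise, so this is `Fintype.sum_sum_type`
        rw [Fintype.sum_sum_type, ← sum_coe_sort G.edgeFinset]
        rfl
    _ = ∑ x, x := Fintype.sum_eq_sum_univ_of_existsUnique _ hbij
    _ = 0 := Fintype.sum_pi_eq_zero_of_charTwo
end

section
/- Suppose that for every list of 2^{n-2} nonzero vectors in F_2^{n-1} with sum zero there is a partition of F_2^{n-1} into pairs whose sums realize the list (Conjecture holds in dimension n-1). Then for any vectors v_1, ..., v_{2^{n-1}} in F_2^n (n ≥ 3) satisfying v_{2i-1} = v_{2i} for all 1 ≤ i ≤ 2^{n-2} and all v_i nonzero, there exists a partition of F_2^n into pairs (p_i, q_i), 1 ≤ i ≤ 2^{n-1}, such that p_i + q_i = v_i for all i. -/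
/-- A partition of `F_2^n` into `2^{n-1}` pairs `(p i, q i)`: the `2^n` vectors
`p i, q i` are pairwise distinct and cover all of `F_2^n`. -/
def PairPartition (n : ℕ) (p q : Fin (2 ^ (n - 1)) → (Fin n → ZMod 2)) : Prop :=
  Function.Bijective (fun x : Fin (2 ^ (n - 1)) × Bool => if x.2 then p x.1 else q x.1)

/-- The pairing conjecture in `F_2^m`: any `2^{m-1}` nonzero vectors summing to zero are
the pair-sums of a partition of `F_2^m` into pairs. -/
def PairingConj (m : ℕ) : Prop :=
  ∀ v : Fin (2 ^ (m - 1)) → (Fin m → ZMod 2), (∀ i, v i ≠ 0) → ∑ i, v i = 0 →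
    ∃ p q : Fin (2 ^ (m - 1)) → (Fin m → ZMod 2),
      PairPartition m p q ∧ ∀ i, p i + q i = v i

/-!
Let `u j` be the common value of `v (2j)` and `v (2j+1)`. Choose `z ≠ 0` and replace the entries
of `u` equal to `z` by vectors `f j ∉ {0, z}` such that `∑ f ∈ {0, z}`. The projection
`F_2^n → F_2^n / ⟨z⟩ ≅ F_2^{n-1}` maps `f` to nonzero vectors summing to zero, which the
conjecture realizes by pairs `(P j, Q j)`. The four preimages of `P j` and `Q j` split into two
pairs with difference `u j`: along `z` if `u j = z`, and otherwise along `u j = f j`, which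
projects to `P j + Q j`.
-/

open Module Submodule Function Finset

def IsPairing {ι V : Type*} [Add V] (p q w : ι → V) : Prop :=
  Bijective (fun x : ι × Bool => if x.2 then p x.1 else q x.1) ∧ ∀ i, p i + q i = w i

theorem IsPairing.comp_equiv {ι κ V : Type*} [Add V] {p q w : ι → V} (h : IsPairing p q w)
    (e : κ ≃ ι) : IsPairing (p ∘ e) (q ∘ e) (w ∘ e) :=
  ⟨h.1.comp (e.prodCongr (Equiv.refl Bool)).bijective, fun i => h.2 (e i)⟩

theorem mem_span_singleton_iff_of_zmod_two {V : Type*} [AddCommGroup V] [Module (ZMod 2) V]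
    {x z : V} : x ∈ (ZMod 2) ∙ z ↔ x = 0 ∨ x = z := by
  rw [mem_span_singleton]
  constructor
  · rintro ⟨a, rfl⟩
    fin_cases a
    exacts [Or.inl (zero_smul _ z), Or.inr (one_smul _ z)]
  · rintro (rfl | rfl)
    exacts [⟨0, zero_smul _ z⟩, ⟨1, one_smul _ _⟩]

theorem exists_surjective_ker_eq_span {K V : Type*} [Field K] [AddCommGroup V] [Module K V]
    [FiniteDimensional K V] {d : ℕ} (hd : finrank K V = d + 1) {z : V} (hz : z ≠ 0) :
    ∃ π : V →ₗ[K] (Fin d → K), Surjective π ∧ LinearMap.ker π = K ∙ z := by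
  have hquot : finrank K (V ⧸ K ∙ z) = finrank K (Fin d → K) := by
    have := (K ∙ z).finrank_quotient_add_finrank
    rw [finrank_span_singleton hz, hd] at this
    rw [finrank_fin_fun]
    omega
  let e := LinearEquiv.ofFinrankEq _ _ hquot
  exact ⟨e.toLinearMap ∘ₗ (K ∙ z).mkQ, e.surjective.comp (K ∙ z).mkQ_surjective,
    by rw [LinearEquiv.ker_comp, ker_mkQ]⟩

section Lift

variable {V W : Type*} [AddCommGroup V] [Module (ZMod 2) V] [AddCommGroup W] [Module (ZMod 2) W]
  [Finite V] {π : V →ₗ[ZMod 2] W} {z : V}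

theorem natCard_eq_two_mul_of_ker_eq_span (hπ : Surjective π) (hz : z ≠ 0)
    (hker : LinearMap.ker π = (ZMod 2) ∙ z) : Nat.card V = 2 * Nat.card W := by
  have : Finite W := Finite.of_surjective π hπ
  have hrank := LinearMap.finrank_range_add_finrank_ker π
  rw [LinearMap.range_eq_top.mpr hπ, finrank_top, hker, finrank_span_singleton hz] at hrank
  rw [natCard_eq_pow_finrank (K := ZMod 2), natCard_eq_pow_finrank (K := ZMod 2) (V := W),
    ← hrank, Nat.card_zmod, pow_succ, mul_comm]

theorem IsPairing.lift {ι : Type*} (hπ : Surjective π) (hz : z ≠ 0)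
    (hker : LinearMap.ker π = (ZMod 2) ∙ z) {P Q w : ι → W} (hPQ : IsPairing P Q w)
    {u : ι → V} (hu : ∀ i, u i = z ∨ π (u i) = w i) :
    ∃ p q : ι × Bool → V, IsPairing p q (u ∘ Prod.fst) := by
  classical
  let σ := surjInv hπ
  have hσ : ∀ w, π (σ w) = w := surjInv_eq hπ
  have hπz : π z = 0 := by
    rw [← LinearMap.mem_ker, hker]
    exact mem_span_singleton_self z
  let e : ι × Bool → W := fun x => if x.2 then P x.1 else Q x.1
  let p : ι × Bool → V := fun x =>
    if u x.1 = z then σ (e x) else σ (P x.1) + if x.2 then z else 0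
  let Φ : (ι × Bool) × Bool → V := fun y => if y.2 then p y.1 else p y.1 + u y.1.1
  have hΦ : ∀ y, π (Φ y) = e (y.1.1, if u y.1.1 = z then y.1.2 else y.2) := by
    rintro ⟨⟨i, c⟩, b⟩
    rcases hu i with hi | hi
    · cases b <;> simp [Φ, p, hi, hσ, hπz]
    · have hQ : Q i = P i + π (u i) := by
        rw [hi, ← hPQ.2 i, ← add_assoc, ZModModule.add_self, zero_add]
      by_cases hiz : u i = z
      · cases b <;> simp [Φ, p, hiz, hσ, hπz]
      · cases b <;> cases c <;> simp [Φ, p, e, hiz, hσ, hπz, hQ]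
  have hinj : Injective Φ := by
    rintro ⟨⟨i, c⟩, b⟩ ⟨⟨i', c'⟩, b'⟩ h
    have hπh := (hΦ _).symm.trans ((congrArg π h).trans (hΦ _))
    obtain ⟨rfl, hbit⟩ := Prod.ext_iff.mp (hPQ.1.1 hπh)
    by_cases hiz : u i = z
    · simp only [hiz, if_true] at hbit
      subst hbit
      cases b <;> cases b' <;> simp [Φ, p, hiz, hz] at h ⊢
    · simp only [hiz, if_false] at hbit
      subst hbit
      cases b <;> cases c <;> cases c' <;> simp [Φ, p, hiz, hz] at h ⊢
  refine ⟨p, fun x => p x + u x.1, ?_, fun x => by simp [← add_assoc, ZModModule.add_self]⟩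
  refine hinj.bijective_of_nat_card_le ?_
  rw [natCard_eq_two_mul_of_ker_eq_span hπ hz hker, ← Nat.card_eq_of_bijective _ hPQ.1]
  simp [Nat.card_prod, mul_comm]

end Lift

theorem exists_fun_notMem_sum_eq {G κ : Type*} [AddCommGroup G] [Fintype G] [Fintype κ]
    {B : Finset G} (hB : 2 * #B < Fintype.card G) (hκ : 2 ≤ Fintype.card κ) (a : G) :
    ∃ y : κ → G, (∀ k, y k ∉ B) ∧ ∑ k, y k = a := by
  classical
  suffices h : ∀ t, 2 ≤ t → ∀ a : G, ∃ y : Fin t → G, (∀ k, y k ∉ B) ∧ ∑ k, y k = a by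
    obtain ⟨y, hyB, hy⟩ := h _ hκ a
    exact ⟨y ∘ Fintype.equivFin κ, fun k => hyB _, hy ▸ (Fintype.equivFin κ).sum_comp y⟩
  intro t ht
  induction t, ht using Nat.le_induction with
  | base =>
    intro a
    -- `x ∉ B` and `a - x ∉ B`: at most `2 * #B` values are excluded
    obtain ⟨x, -, hx⟩ := exists_mem_notMem_of_card_lt_card (s := B ∪ B.image (a - ·))
      (t := univ) (by grw [card_union_le, card_image_le, card_univ]; omega)
    simp only [mem_union, mem_image, not_or, not_exists, not_and] at hx
    refine ⟨![x, a - x], fun k => ?_, by simp⟩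
    fin_cases k
    · exact hx.1
    · exact fun h => hx.2 _ h (sub_sub_cancel a x)
  | succ t _ ih =>
    intro a
    obtain ⟨g, -, hg⟩ := exists_mem_notMem_of_card_lt_card (s := B) (t := univ)
      (by rw [card_univ]; omega)
    obtain ⟨y, hyB, hy⟩ := ih (a - g)
    exact ⟨Fin.cons g y, Fin.cases hg hyB, by simp [Fin.sum_cons, hy]⟩

theorem exists_modification_sum_eq_zero {G ι : Type*} [AddCommGroup G] [DecidableEq G] [Fintype ι]
    {u : ι → G} (hu : ∀ j, u j ≠ 0) {z : G} {y : {j // u j = z} → G}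
    (hy : ∀ k, y k ≠ 0 ∧ y k ≠ z) (hsum : ∑ k, y k + ∑ j : {j // u j ≠ z}, u j = 0) :
    ∃ f : ι → G, (∀ j, f j ≠ 0 ∧ f j ≠ z) ∧ ∑ j, f j = 0 ∧ ∀ j, u j ≠ z → f j = u j := by
  refine ⟨fun j => if h : u j = z then y ⟨j, h⟩ else u j, fun j => ?_, ?_, fun j h => dif_neg h⟩
  · by_cases h : u j = z
    · simpa only [h, dite_true] using hy ⟨j, h⟩
    · simpa only [h, dite_false] using ⟨hu j, h⟩
  · rw [← Fintype.sum_subtype_add_sum_subtype (fun j => u j = z), ← hsum]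
    congr 1
    · exact Fintype.sum_congr _ _ fun k : {j // u j = z} => dif_pos k.2
    · exact Fintype.sum_congr _ _ fun k : {j // u j ≠ z} => dif_neg k.2

theorem exists_ne_zero_modification {G ι : Type*} [AddCommGroup G] [Fintype G] [Fintype ι]
    (u : ι → G) (hu : ∀ j, u j ≠ 0) (hι : 2 ≤ Fintype.card ι)
    (hG : 4 * Fintype.card ι ≤ Fintype.card G) :
    ∃ z ≠ 0, ∃ f : ι → G, (∀ j, f j ≠ 0 ∧ f j ≠ z) ∧ (∑ j, f j = 0 ∨ ∑ j, f j = z) ∧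
      ∀ j, u j ≠ z → f j = u j := by
  classical
  set s := ∑ j, u j with hs_def
  by_cases hs : s = 0
  · obtain ⟨z, -, hz⟩ := exists_mem_notMem_of_card_lt_card (s := insert 0 (univ.image u))
      (t := univ) (by grw [card_insert_le, card_image_le, card_univ, card_univ]; omega)
    simp only [mem_insert, mem_image, mem_univ, true_and, not_or, not_exists] at hz
    exact ⟨z, hz.1, u, fun j => ⟨hu j, fun h => hz.2 j h⟩, Or.inl hs, fun _ _ => rfl⟩
  -- a single replaced entry would have to be `z - s`, which must avoid `0` and `z`
  obtain ⟨j₀, hj₀⟩ : ∃ j₀, u j₀ ≠ s ∨ 2 ≤ Fintype.card {j // u j = u j₀} := by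
    by_cases h : ∃ j, u j ≠ s
    · obtain ⟨j, hj⟩ := h
      exact ⟨j, Or.inl hj⟩
    · simp only [not_exists, not_not] at h
      obtain ⟨j₀⟩ : Nonempty ι := Fintype.card_pos_iff.mp (by omega)
      exact ⟨j₀, Or.inr (by simpa [h] using hι)⟩
  set z := u j₀
  have hsplit : Fintype.card {j // u j = z} • z + ∑ j : {j // u j ≠ z}, u j = s := by
    rw [hs_def, ← Fintype.sum_subtype_add_sum_subtype (fun j => u j = z) u]
    congr 1
    simp [Fintype.sum_congr _ (fun _ => z) fun k : {j // u j = z} => k.2]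
  obtain ⟨y, hy, hysum⟩ : ∃ y : {j // u j = z} → G,
      (∀ k, y k ≠ 0 ∧ y k ≠ z) ∧ ∑ k, y k + ∑ j : {j // u j ≠ z}, u j = 0 := by
    by_cases h2 : 2 ≤ Fintype.card {j // u j = z}
    · obtain ⟨y, hyB, hy⟩ := exists_fun_notMem_sum_eq (B := {0, z})
        (by grw [card_insert_le, card_singleton]; omega) h2 (-∑ j : {j // u j ≠ z}, u j)
      exact ⟨y, fun k => by simpa [not_or] using hyB k, by rw [hy, neg_add_cancel]⟩
    · have h1 : Fintype.card {j // u j = z} = 1 := by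
        have := Fintype.card_pos (α := {j // u j = z}) (h := ⟨⟨j₀, rfl⟩⟩)
        omega
      have hzs : z ≠ s := hj₀.resolve_right h2
      rw [h1, one_smul] at hsplit
      refine ⟨fun _ => z - s, fun _ => ⟨sub_ne_zero.mpr hzs, by simpa using hs⟩, ?_⟩
      simp [h1, ← hsplit]
  obtain ⟨f, hf, hfsum, hfu⟩ := exists_modification_sum_eq_zero hu hy hysum
  exact ⟨z, hu j₀, f, hf, Or.inl hfsum, hfu⟩

theorem exists_equiv_prod_bool_of_pairs {α : Type*} {N k : ℕ} (hN : N = 2 * k) (v : Fin N → α)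
    (hpair : ∀ (j : ℕ) (h : 2 * j + 1 < N),
      v ⟨2 * j, lt_trans (Nat.lt_succ_self _) h⟩ = v ⟨2 * j + 1, h⟩) :
    ∃ (e : Fin N ≃ Fin k × Bool) (u : Fin k → α), ∀ i, v i = u (e i).1 := by
  subst hN
  let e : Fin (2 * k) ≃ Fin k × Bool :=
    ((finCongr (mul_comm 2 k)).trans finProdFinEquiv.symm).trans
      ((Equiv.refl _).prodCongr finTwoEquiv)
  have he : ∀ i, ((e i).1 : ℕ) = i / 2 := fun i => Fin.coe_divNat _
  refine ⟨e, fun j => v ⟨2 * j, by omega⟩, fun i => ?_⟩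
  have hi : 2 * (i / 2) < 2 * k := by omega
  have hvi : v i = v ⟨2 * (i / 2), hi⟩ := by
    rcases Nat.even_or_odd' i with ⟨j, hj | hj⟩
    · congr 1; ext; simp only; omega
    · rw [hpair (i / 2) (by omega)]; congr 1; ext; simp only; omega
  simp only [hvi, ← he]

/-- If the pairing conjecture holds in `F_2^{n-1}` (where `n ≥ 3`), then any `2^{n-1}`
nonzero vectors in `F_2^n` with `v_{2i-1} = v_{2i}` for all `1 ≤ i ≤ 2^{n-2}` are realized
as the pair-sums of a partition of `F_2^n` into pairs. -/
theorem pairing_of_paired_values_of_conj_pred (n : ℕ) (hn : 3 ≤ n)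
    (hconj : PairingConj (n - 1))
    (v : Fin (2 ^ (n - 1)) → (Fin n → ZMod 2))
    (hnz : ∀ i, v i ≠ 0)
    (hpair : ∀ (j : ℕ) (h : 2 * j + 1 < 2 ^ (n - 1)),
      v ⟨2 * j, lt_trans (Nat.lt_succ_self _) h⟩ = v ⟨2 * j + 1, h⟩) :
    ∃ p q : Fin (2 ^ (n - 1)) → (Fin n → ZMod 2),
      PairPartition n p q ∧ ∀ i, p i + q i = v i := by
  have hpow : 2 ^ (n - 1) = 2 * 2 ^ (n - 1 - 1) := by
    rw [← pow_succ']; congr 1; omega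
  obtain ⟨e, u, hvu⟩ := exists_equiv_prod_bool_of_pairs hpow v hpair
  have hu : ∀ j, u j ≠ 0 := fun j => by simpa [hvu] using hnz (e.symm (j, true))
  obtain ⟨z, hz, f, hf, hfsum, hfu⟩ := exists_ne_zero_modification u hu
    (by simpa using Nat.le_self_pow (by omega) 2)
    (by
      simp only [Fintype.card_fin, Fintype.card_fun, ZMod.card]
      calc 4 * 2 ^ (n - 1 - 1) = 2 ^ (n - 1 - 1 + 2) := by ring
        _ ≤ 2 ^ n := Nat.pow_le_pow_right (by norm_num) (by omega))
  obtain ⟨π, hπ, hker⟩ := exists_surjective_ker_eq_span (d := n - 1)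
    (by rw [finrank_fin_fun]; omega) hz
  have hπ0 : ∀ x, π x = 0 ↔ x = 0 ∨ x = z := fun x => by
    rw [← LinearMap.mem_ker, hker, mem_span_singleton_iff_of_zmod_two]
  obtain ⟨P, Q, hPQ⟩ := hconj (π ∘ f) (fun j => by simpa [hπ0] using hf j)
    (by simpa only [comp_apply, ← map_sum, hπ0] using hfsum)
  obtain ⟨p, q, hpq⟩ := IsPairing.lift hπ hz hker hPQ (u := u) fun j =>
    (eq_or_ne (u j) z).imp_right fun h => by rw [comp_apply, hfu j h]
  rw [show v = (u ∘ Prod.fst) ∘ e from funext hvu]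
  exact ⟨p ∘ e, q ∘ e, hpq.comp_equiv e⟩
end

section
/- Suppose the pairing conjecture holds in F_2^k, i.e., for any 2^{k-1} nonzero vectors in F_2^k summing to zero there is a partition of F_2^k into pairs realizing them as pair-sums. Then for any n ≥ k and any 2^{n-1} nonzero vectors v_1, ..., v_{2^{n-1}} in F_2^n with sum zero and with dim(span{v_1, ..., v_{2^{n-1}}}) ≤ k, there exists a partition of F_2^n into pairs (p_i, q_i) such that p_i + q_i = v_i for all 1 ≤ i ≤ 2^{n-1}. -/
open Finset Module Submodule

private lemma zmod2_addself {n : ℕ} (x : Fin n → ZMod 2) : x + x = 0 := by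
  funext i; show x i + x i = 0; generalize x i = a; revert a; decide

private lemma zmod2_eq_one {a : ZMod 2} (h : a ≠ 0) : a = 1 := by revert a; decide

private lemma nsmul_mod2 {n : ℕ} (x : Fin n → ZMod 2) (a : ℕ) : a • x = (a % 2) • x := by
  calc a • x = (a % 2 + 2 * (a / 2)) • x := by rw [Nat.mod_add_div]
    _ = (a % 2) • x + ((a / 2) • x + (a / 2) • x) := by
          rw [add_nsmul, two_mul, add_nsmul]
    _ = (a % 2) • x := by rw [zmod2_addself, add_zero]

private lemma knapsack {G : Type*} [DecidableEq G] (V : Finset G) (u : G → ℕ) :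
    ∀ (kk : ℕ) (l : G → ℕ), (∀ x ∈ V, l x ≤ u x) → (∀ x ∈ V, u x % 2 = l x % 2) →
      (∑ x ∈ V, l x) + 2 * kk ≤ ∑ x ∈ V, u x →
      ∃ a : G → ℕ, (∀ x ∈ V, l x ≤ a x ∧ a x ≤ u x ∧ a x % 2 = l x % 2) ∧
        ∑ x ∈ V, a x = (∑ x ∈ V, l x) + 2 * kk := by
  intro kk
  induction kk with
  | zero => exact fun l h1 _ _ => ⟨l, fun x hx => ⟨le_rfl, h1 x hx, rfl⟩, by ring⟩
  | succ kk ih =>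
    intro l h1 h2 h3
    have hlt : ∑ x ∈ V, l x < ∑ x ∈ V, u x := by omega
    obtain ⟨x, hxV, hx⟩ := Finset.exists_lt_of_sum_lt hlt
    have hx2 : l x + 2 ≤ u x := by have := h2 x hxV; omega
    set l' := Function.update l x (l x + 2) with hl'
    have hupd : ∀ y, l' y = if y = x then l x + 2 else l y := fun y => Function.update_apply l x _ y
    have hsum' : ∑ y ∈ V, l' y = (∑ y ∈ V, l y) + 2 := by
      rw [hl', Finset.sum_update_of_mem hxV, Finset.sum_eq_sum_sdiff_singleton_add hxV l]
      omega
    have h1' : ∀ y ∈ V, l' y ≤ u y := by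
      intro y hy; rw [hupd y]; split
      · next h => subst h; exact hx2
      · exact h1 y hy
    have h2' : ∀ y ∈ V, u y % 2 = l' y % 2 := by
      intro y hy; rw [hupd y]; split
      · next h => subst h; have := h2 y hy; omega
      · exact h2 y hy
    obtain ⟨a, ha1, ha2⟩ := ih l' h1' h2' (by omega)
    refine ⟨a, fun y hy => ?_, by omega⟩
    obtain ⟨g1, g2, g3⟩ := ha1 y hy
    have e : l' y = if y = x then l x + 2 else l y := hupd y
    by_cases h : y = x
    · subst h; rw [e, if_pos rfl] at g1 g3; exact ⟨by omega, g2, by omega⟩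
    · rw [e, if_neg h] at g1 g3; exact ⟨g1, g2, g3⟩

private lemma invsub {m : ℕ} (g : Fin m → ZMod 2) (hg : g ≠ 0) :
    ∀ (t : ℕ) (K : Finset (Fin m → ZMod 2)), (∀ x ∈ K, x + g ∈ K) → 2 * t ≤ K.card →
      ∃ T, T ⊆ K ∧ T.card = 2 * t ∧ ∑ x ∈ T, x = t • g := by
  intro t
  induction t with
  | zero => exact fun K _ _ => ⟨∅, empty_subset _, by simp, by simp⟩
  | succ t ih =>
    intro K hinv hcard
    obtain ⟨x, hx⟩ : K.Nonempty := card_pos.mp (by omega)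
    have hxg : x + g ∈ K := hinv x hx
    have hxx : x ≠ x + g := fun h => hg (left_eq_add.mp h)
    set K' := (K.erase x).erase (x + g) with hK'
    have hsub : K' ⊆ K := (erase_subset _ _).trans (erase_subset _ _)
    have hinv' : ∀ y ∈ K', y + g ∈ K' := by
      intro y hy
      rw [hK', mem_erase, mem_erase] at hy ⊢
      obtain ⟨hy1, hy2, hy3⟩ := hy
      refine ⟨fun h => hy2 (add_right_cancel h), fun h => ?_, hinv y hy3⟩
      · apply hy1
        have hxgy : x + g = y := by rw [← h, add_assoc, zmod2_addself, add_zero]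
        exact hxgy.symm
    have hm1 : x + g ∈ K.erase x := mem_erase.mpr ⟨Ne.symm hxx, hxg⟩
    have hcard' : K'.card = K.card - 2 := by
      rw [hK', card_erase_of_mem hm1, card_erase_of_mem hx]
      omega
    obtain ⟨T, hT1, hT2, hT3⟩ := ih K' hinv' (by omega)
    have hxK' : x ∉ K' := by rw [hK', mem_erase, mem_erase]; tauto
    have hxgK' : x + g ∉ K' := by rw [hK', mem_erase]; tauto
    have hxgT : x + g ∉ T := fun h => hxgK' (hT1 h)
    have hxT : x ∉ insert (x + g) T := by
      rw [mem_insert]; rintro (h | h); exact hxx h; exact hxK' (hT1 h)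
    refine ⟨insert x (insert (x + g) T), ?_, ?_, ?_⟩
    · refine insert_subset hx (insert_subset hxg (hT1.trans hsub))
    · rw [card_insert_of_notMem hxT, card_insert_of_notMem hxgT, hT2]; ring
    · rw [sum_insert hxT, sum_insert hxgT, hT3]
      have e : x + (x + g + t • g) = (x + x) + (g + t • g) := by abel
      rw [e, zmod2_addself, zero_add, succ_nsmul, add_comm]


private lemma halving {m M : ℕ} (hM2 : 2 ∣ M)
    (W : Submodule (ZMod 2) (Fin m → ZMod 2)) (WF : Finset (Fin m → ZMod 2))
    (hWF : ∀ x, x ∈ W ↔ x ∈ WF) (hWcard : WF.card ≤ 2 * M)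
    {ι : Type} [Fintype ι] [DecidableEq ι] (hι : Fintype.card ι = 2 * M)
    (v : ι → (Fin m → ZMod 2)) (hvW : ∀ i, v i ∈ W) (hvnz : ∀ i, v i ≠ 0) :
    ∃ s : Finset ι, s.card = M ∧ ∑ i ∈ s, v i = 0 := by
  classical
  set mlt : (Fin m → ZMod 2) → ℕ := fun x => (univ.filter (fun i => v i = x)).card with hmlt
  set V : Finset (Fin m → ZMod 2) := univ.image v with hV
  have hVW : ∀ x ∈ V, x ∈ W ∧ x ≠ 0 := by
    intro x hxV; rw [hV, mem_image] at hxV; obtain ⟨i, -, hi⟩ := hxV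
    exact hi ▸ ⟨hvW i, hvnz i⟩
  have hmlt_pos : ∀ x ∈ V, 1 ≤ mlt x := by
    intro x hxV; rw [hV, mem_image] at hxV; obtain ⟨i, -, hi⟩ := hxV
    have h1 : i ∈ univ.filter (fun i => v i = x) := by simp [hi]
    have h2 : 0 < mlt x := card_pos.mpr ⟨i, h1⟩
    omega
  have hsum_m : ∑ x ∈ V, mlt x = 2 * M := by
    rw [hV, hmlt, ← Finset.card_eq_sum_card_image v univ, card_univ, hι]
  set L : Finset (Fin m → ZMod 2) := V.filter (fun x => mlt x % 2 = 1) with hL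
  have hLV : L ⊆ V := filter_subset _ _
  have hr2 : L.card % 2 = 0 := by
    have h1 : (∑ x ∈ V, mlt x) % 2 = (∑ x ∈ V, mlt x % 2) % 2 := Finset.sum_nat_mod _ _ _
    have h2 : ∑ x ∈ V, mlt x % 2 = L.card := by
      rw [← Finset.sum_filter_add_sum_filter_not V (fun x => mlt x % 2 = 1) (fun x => mlt x % 2)]
      have e1 : ∑ x ∈ V.filter (fun x => mlt x % 2 = 1), mlt x % 2 = L.card := by
        rw [Finset.sum_congr rfl (fun x hx => (mem_filter.mp hx).2), ← hL]
        simp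
      have e2 : ∑ x ∈ V.filter (fun x => ¬(mlt x % 2 = 1)), mlt x % 2 = 0 := by
        apply Finset.sum_eq_zero; intro x hx
        have := (mem_filter.mp hx).2; omega
      rw [e1, e2, add_zero]
    omega
  have hLcard : L.card + 1 ≤ WF.card := by
    have h0 : (0 : Fin m → ZMod 2) ∉ L := fun h => (hVW 0 (hLV h)).2 rfl
    have hsub : insert (0 : Fin m → ZMod 2) L ⊆ WF := by
      intro x hx; rcases mem_insert.mp hx with h | h
      · subst h; exact (hWF 0).mp W.zero_mem
      · exact (hWF x).mp (hVW x (hLV h)).1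
    have := card_le_card hsub
    rwa [card_insert_of_notMem h0] at this
  -- find T
  obtain ⟨T, hTL, hTc2, hTcM, hTLM, hTsum⟩ :
      ∃ T : Finset (Fin m → ZMod 2), T ⊆ L ∧ T.card % 2 = 0 ∧ T.card ≤ M ∧
        L.card - T.card ≤ M ∧ ∑ x ∈ T, x = 0 := by
    by_cases hrM : L.card ≤ M
    · exact ⟨∅, empty_subset _, by simp, by simp, by simp; omega, by simp⟩
    · push_neg at hrM
      obtain ⟨g, hgL⟩ : L.Nonempty := card_pos.mp (by omega)
      have hgW : g ∈ W := (hVW g (hLV hgL)).1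
      have hgnz : g ≠ 0 := (hVW g (hLV hgL)).2
      set K : Finset (Fin m → ZMod 2) := L.filter (fun x => x + g ∈ L) with hK
      set L' : Finset (Fin m → ZMod 2) := L.image (· + g) with hL'
      have hL'card : L'.card = L.card := card_image_of_injective _ (add_left_injective g)
      have hUnion : (L ∪ L').card ≤ 2 * M := by
        refine le_trans (card_le_card ?_) hWcard
        intro x hx
        rcases mem_union.mp hx with h | h
        · exact (hWF x).mp (hVW x (hLV h)).1
        · rw [hL', mem_image] at h; obtain ⟨y, hy, hyx⟩ := h
          exact (hWF x).mp (hyx ▸ W.add_mem (hVW y (hLV hy)).1 hgW)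
      have hKeq : K = L ∩ L' := by
        ext x
        rw [hK, mem_filter, mem_inter, hL', mem_image]
        constructor
        · rintro ⟨h1, h2⟩
          exact ⟨h1, ⟨x + g, h2, by rw [add_assoc, zmod2_addself, add_zero]⟩⟩
        · rintro ⟨h1, ⟨y, hy, hyx⟩⟩
          refine ⟨h1, ?_⟩
          have : x + g = y := by rw [← hyx, add_assoc, zmod2_addself, add_zero]
          rwa [this]
      have hKcard : 2 * L.card ≤ K.card + 2 * M := by
        have := Finset.card_union_add_card_inter L L'
        rw [← hKeq] at this; omega
      have hinvK : ∀ x ∈ K, x + g ∈ K := by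
        intro x hx
        rw [hK, mem_filter] at hx ⊢
        exact ⟨hx.2, by rw [add_assoc, zmod2_addself, add_zero]; exact hx.1⟩
      obtain ⟨t, ht1, ht2⟩ : ∃ t : ℕ, L.card - M ≤ 4 * t ∧ 4 * t ≤ L.card - M + 2 :=
        ⟨(L.card - M + 2) / 4, by omega, by omega⟩
      have h4tM : 4 * t ≤ M := by omega
      obtain ⟨T, hT1, hT2, hT3⟩ := invsub g hgnz (2 * t) K hinvK (by omega)
      have hTsum0 : ∑ x ∈ T, x = 0 := by
        rw [hT3, nsmul_mod2]; simp [Nat.mul_mod_right]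
      have hTL2 : T ⊆ L := hT1.trans (filter_subset _ _)
      exact ⟨T, hTL2, by omega, by omega, by omega, hTsum0⟩
  -- common part
  set l : (Fin m → ZMod 2) → ℕ := fun x => if x ∈ T then 1 else 0 with hl
  set uu : (Fin m → ZMod 2) → ℕ := fun x => if mlt x % 2 = l x % 2 then mlt x else mlt x - 1
    with huu
  have hlT : ∀ x ∈ T, l x = 1 := fun x hx => by simp [hl, hx]
  have hlnT : ∀ x, x ∉ T → l x = 0 := fun x hx => by simp [hl, hx]
  have huuT : ∀ x, mlt x % 2 = l x % 2 → uu x = mlt x := fun x h => by simp [huu, h]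
  have huunT : ∀ x, ¬(mlt x % 2 = l x % 2) → uu x = mlt x - 1 := fun x h => by simp [huu, h]
  have hTV : T ⊆ V := hTL.trans hLV
  have hTodd : ∀ x ∈ T, mlt x % 2 = 1 := fun x hx => (mem_filter.mp (hTL hx)).2
  have hlsum : ∑ x ∈ V, l x = T.card := by
    rw [Finset.sum_congr rfl (fun x _ => (rfl : l x = if x ∈ T then 1 else 0)),
      Finset.sum_ite_mem V T (fun _ => 1), Finset.inter_eq_right.mpr hTV]
    simp
  have huml : ∀ x ∈ V, uu x ≤ mlt x := by
    intro x hx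
    by_cases h : mlt x % 2 = l x % 2
    · rw [huuT x h]
    · rw [huunT x h]; omega
  have hl_le : ∀ x ∈ V, l x ≤ uu x := by
    intro x hx
    have h0 := hmlt_pos x hx
    by_cases hT : x ∈ T
    · have e1 := hlT x hT
      have e2 := hTodd x hT
      rw [e1, huuT x (by simp [e1, e2])]
      omega
    · rw [hlnT x hT]; exact Nat.zero_le _
  have hpar : ∀ x ∈ V, uu x % 2 = l x % 2 := by
    intro x hx
    have h0 := hmlt_pos x hx
    have e1 : l x = 1 ∨ l x = 0 := by
      by_cases hT : x ∈ T
      · exact Or.inl (hlT x hT)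
      · exact Or.inr (hlnT x hT)
    rcases e1 with e | e <;>
    · rw [e]
      by_cases h : mlt x % 2 = l x % 2
      · rw [huuT x h, ← e]; rw [e] at h; omega
      · rw [huunT x h]; rw [e] at h; omega
  have hbad : V.filter (fun x => ¬(mlt x % 2 = l x % 2)) = L \ T := by
    ext x
    rw [mem_filter, mem_sdiff]
    by_cases hT : x ∈ T
    · have h1 := hTodd x hT
      have h2 := hlT x hT
      have hfalse : mlt x % 2 = l x % 2 := by rw [h1, h2]
      simp [hfalse, hT]
    · have h2 := hlnT x hT
      rw [h2]
      constructor
      · rintro ⟨hxV, hne⟩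
        exact ⟨mem_filter.mpr ⟨hxV, by omega⟩, hT⟩
      · rintro ⟨hxL, -⟩
        exact ⟨hLV hxL, by have := (mem_filter.mp hxL).2; omega⟩
  have husum : ∑ x ∈ V, uu x + (L \ T).card = 2 * M := by
    have key : ∀ x ∈ V, uu x + (if ¬(mlt x % 2 = l x % 2) then 1 else 0) = mlt x := by
      intro x hx; have h0 := hmlt_pos x hx
      by_cases h : mlt x % 2 = l x % 2
      · rw [huuT x h, if_neg (not_not_intro h), add_zero]
      · rw [huunT x h, if_pos h]; omega
    have e1 : ∑ x ∈ V, (uu x + (if ¬(mlt x % 2 = l x % 2) then 1 else 0)) = 2 * M := by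
      rw [Finset.sum_congr rfl key]; exact hsum_m
    rw [Finset.sum_add_distrib] at e1
    rw [← e1, ← hbad, Finset.card_filter]
  have hLTM : (L \ T).card ≤ M := by rw [card_sdiff_of_subset hTL]; omega
  have hMT2 : 2 ∣ (M - T.card) := by omega
  obtain ⟨a, ha, hasum⟩ := knapsack V uu ((M - T.card) / 2) l hl_le hpar (by omega)
  have hasum' : ∑ x ∈ V, a x = M := by rw [hasum, hlsum]; omega
  have hch : ∀ x ∈ V, ∃ tt : Finset ι, tt ⊆ univ.filter (fun i => v i = x) ∧ tt.card = a x := by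
    intro x hx
    apply Finset.exists_subset_card_eq
    calc a x ≤ uu x := (ha x hx).2.1
      _ ≤ mlt x := huml x hx
      _ = (univ.filter (fun i => v i = x)).card := rfl
  choose! c hc1 hc2 using hch
  have hdisj : ∀ x ∈ V, ∀ y ∈ V, x ≠ y → Disjoint (c x) (c y) := by
    intro x hx y hy hxy
    rw [Finset.disjoint_left]
    intro i hix hiy
    have e1 : v i = x := (mem_filter.mp (hc1 x hx hix)).2
    have e2 : v i = y := (mem_filter.mp (hc1 y hy hiy)).2
    exact hxy (e1 ▸ e2 ▸ rfl)
  refine ⟨V.biUnion c, ?_, ?_⟩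
  · rw [card_biUnion hdisj, Finset.sum_congr rfl (fun x hx => hc2 x hx), hasum']
  · rw [Finset.sum_biUnion (fun x hx y hy hxy => hdisj x hx y hy hxy)]
    have inner : ∀ x ∈ V, ∑ i ∈ c x, v i = if x ∈ T then x else 0 := by
      intro x hx
      rw [Finset.sum_congr rfl (fun i hi => (mem_filter.mp (hc1 x hx hi)).2),
        Finset.sum_const, hc2 x hx, nsmul_mod2, (ha x hx).2.2]
      by_cases hT : x ∈ T
      · rw [hlT x hT, if_pos hT]; norm_num
      · rw [hlnT x hT, if_neg hT]; norm_num
    rw [Finset.sum_congr rfl inner, Finset.sum_ite_mem V T (fun x => x),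
      Finset.inter_eq_right.mpr hTV]
    exact hTsum


private lemma pairing_const {n : ℕ} (e : Fin n → ZMod 2) (he : e ≠ 0) :
    ∃ p q : Fin (2 ^ (n - 1)) → (Fin n → ZMod 2), PairPartition n p q ∧ ∀ i, p i + q i = e := by
  classical
  have hn : 1 ≤ n := by
    by_contra h
    obtain rfl : n = 0 := by omega
    exact he (funext fun i => i.elim0)
  obtain ⟨j, hj⟩ : ∃ j, e j ≠ 0 := by
    by_contra h; push_neg at h; exact he (funext fun i => h i)
  have hj1 : e j = 1 := zmod2_eq_one hj
  let E : {x : Fin n → ZMod 2 // x j = 0} ≃ ({i : Fin n // ¬(i = j)} → ZMod 2) :=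
    { toFun := fun x i => x.1 i.1
      invFun := fun y => ⟨fun i => if h : i = j then 0 else y ⟨i, h⟩, by simp⟩
      left_inv := by
        intro x; apply Subtype.ext; funext i; dsimp
        by_cases h : i = j
        · rw [if_pos h, h]; exact x.2.symm
        · rw [if_neg h]
      right_inv := by intro y; funext i; simp [i.2] }
  have hcardH : Fintype.card {x : Fin n → ZMod 2 // x j = 0} = 2 ^ (n - 1) := by
    rw [Fintype.card_congr E, Fintype.card_fun, Fintype.card_subtype_compl,
      Fintype.card_subtype_eq, ZMod.card, Fintype.card_fin]
  let σ : Fin (2 ^ (n - 1)) ≃ {x : Fin n → ZMod 2 // x j = 0} :=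
    (Fintype.equivFinOfCardEq hcardH).symm
  refine ⟨fun i => (σ i).1, fun i => (σ i).1 + e, ?_, fun i => ?_⟩
  · rw [PairPartition, Fintype.bijective_iff_injective_and_card]
    constructor
    · rintro ⟨i, b⟩ ⟨i', b'⟩ hE
      have hzero : ∀ i : Fin (2 ^ (n - 1)), (σ i).1 j = 0 := fun i => (σ i).2
      have hone : ∀ i : Fin (2 ^ (n - 1)), ((σ i).1 + e) j = 1 := by
        intro i; show (σ i).1 j + e j = 1; rw [hzero, hj1, zero_add]
      cases b <;> cases b' <;> dsimp at hE
      · -- q = q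
        have h2 : (σ i).1 = (σ i').1 := by
          have := congrArg (· + e) hE
          rwa [add_assoc, add_assoc, zmod2_addself, add_zero, add_zero] at this
        have : i = i' := σ.injective (Subtype.ext h2)
        rw [this]
      · exfalso
        have := congrFun hE j
        rw [hone, hzero] at this
        exact absurd this.symm (by decide)
      · exfalso
        have := congrFun hE j
        rw [hone, hzero] at this
        exact absurd this (by decide)
      · have : i = i' := σ.injective (Subtype.ext hE)
        rw [this]
    · have h1 : Fintype.card (Fin (2 ^ (n - 1)) × Bool) = 2 ^ (n - 1) * 2 := by
        simp
      have h2 : Fintype.card (Fin n → ZMod 2) = 2 ^ n := by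
        simp [Fintype.card_fun]
      rw [h1, h2, ← pow_succ, Nat.sub_add_cancel hn]
  · show (σ i).1 + ((σ i).1 + e) = e
    rw [← add_assoc, zmod2_addself, zero_add]


private lemma finrank_span_comp_eq {α : Type*}
    {M₁ M₂ : Type*} [AddCommGroup M₁] [AddCommGroup M₂] [Module (ZMod 2) M₁]
    [Module (ZMod 2) M₂]
    (f : M₁ →ₗ[ZMod 2] M₂) (hf : Function.Injective f) (u : α → M₁) (w : α → M₂)
    (hw : ∀ a, w a = f (u a)) :
    finrank (ZMod 2) (span (ZMod 2) (Set.range w)) =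
      finrank (ZMod 2) (span (ZMod 2) (Set.range u)) := by
  have h1 : Set.range w = f '' (Set.range u) := by
    ext x
    constructor
    · rintro ⟨a, rfl⟩; exact ⟨u a, ⟨a, rfl⟩, (hw a).symm⟩
    · rintro ⟨y, ⟨a, rfl⟩, rfl⟩; exact ⟨a, hw a⟩
  rw [h1, ← LinearMap.map_span]
  exact (LinearEquiv.finrank_eq (Submodule.equivMapOfInjective f hf _)).symm

private lemma finrank_span_comp_eq' {α : Type*}
    {M₁ M₂ : Type*} [AddCommGroup M₁] [AddCommGroup M₂] [Module (ZMod 2) M₁]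
    [Module (ZMod 2) M₂]
    (f : M₁ ≃ₗ[ZMod 2] M₂) (u : α → M₁) (w : α → M₂)
    (hw : ∀ a, w a = f (u a)) :
    finrank (ZMod 2) (span (ZMod 2) (Set.range w)) =
      finrank (ZMod 2) (span (ZMod 2) (Set.range u)) := by
  apply finrank_span_comp_eq f.toLinearMap f.injective u w
  intro a
  rw [hw a, LinearEquiv.coe_coe]

set_option maxHeartbeats 2000000 in
private lemma aux (k : ℕ) (hk2 : 2 ≤ k) (hconj : PairingConj k) :
    ∀ n, k ≤ n → ∀ v : Fin (2 ^ (n - 1)) → (Fin n → ZMod 2), (∀ i, v i ≠ 0) →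
      ∑ i, v i = 0 →
      finrank (ZMod 2) (span (ZMod 2) (Set.range v)) ≤ k →
      ∃ p q : Fin (2 ^ (n - 1)) → (Fin n → ZMod 2),
        PairPartition n p q ∧ ∀ i, p i + q i = v i := by
  intro n hkn
  induction n, hkn using Nat.le_induction with
  | base => exact fun v h1 h2 _ => hconj v h1 h2
  | succ n hn ih =>
    intro v hnz hsum hdim
    classical
    set W : Submodule (ZMod 2) (Fin (n + 1) → ZMod 2) := span (ZMod 2) (Set.range v) with hW
    have hvW : ∀ i, v i ∈ W := fun i => subset_span (Set.mem_range_self i)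
    -- a nonzero functional vanishing on W
    have hWne : W ≠ ⊤ := by
      intro h
      have h2 := hdim
      rw [h] at h2
      rw [finrank_top] at h2
      have h1 : finrank (ZMod 2) (Fin (n + 1) → ZMod 2) = n + 1 := by simp
      omega
    obtain ⟨x0, hx0⟩ : ∃ x0, x0 ∉ W := by
      by_contra h; push_neg at h; exact hWne (eq_top_iff.mpr fun x _ => h x)
    have hx0Q : W.mkQ x0 ≠ 0 := fun h => hx0 ((Submodule.Quotient.mk_eq_zero W).mp h)
    obtain ⟨ψ, hψ⟩ : ∃ ψ : Module.Dual (ZMod 2) ((Fin (n + 1) → ZMod 2) ⧸ W),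
        ψ (W.mkQ x0) ≠ 0 := by
      by_contra h; push_neg at h
      exact hx0Q ((Module.forall_dual_apply_eq_zero_iff (ZMod 2) _).mp h)
    set φ : (Fin (n + 1) → ZMod 2) →ₗ[ZMod 2] ZMod 2 := ψ.comp W.mkQ with hφ
    have hφW : ∀ x ∈ W, φ x = 0 := by
      intro x hx
      have : W.mkQ x = 0 := (Submodule.Quotient.mk_eq_zero W).mpr hx
      rw [hφ]; simp [this]
    have hφv : ∀ i, φ (v i) = 0 := fun i => hφW (v i) (hvW i)
    have hx0φ : φ x0 ≠ 0 := hψ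
    have hcφ : φ x0 = 1 := zmod2_eq_one hx0φ
    have hφsurj : Function.Surjective φ := by
      intro a
      rcases (by revert a; decide : a = 0 ∨ a = 1) with h | h
      · exact ⟨0, by rw [h, map_zero]⟩
      · exact ⟨x0, by rw [h, hcφ]⟩
    have hker : finrank (ZMod 2) (LinearMap.ker φ) = n := by
      have h1 := LinearMap.finrank_range_add_finrank_ker φ
      rw [LinearMap.range_eq_top.mpr hφsurj, finrank_top] at h1
      have h2 : finrank (ZMod 2) (ZMod 2) = 1 := finrank_self _
      have h3 : finrank (ZMod 2) (Fin (n + 1) → ZMod 2) = n + 1 := by simp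
      omega
    obtain ⟨κ⟩ : Nonempty ((LinearMap.ker φ) ≃ₗ[ZMod 2] (Fin n → ZMod 2)) := by
      apply FiniteDimensional.nonempty_linearEquiv_of_finrank_eq
      rw [hker]; simp
    have hvker : ∀ i, v i ∈ LinearMap.ker φ := fun i => LinearMap.mem_ker.mpr (hφv i)
    -- halving
    haveI : Fintype W := Fintype.ofFinite W
    have hpow : (2 : ℕ) ^ (n + 1 - 1) = 2 * 2 ^ (n - 1) := by
      rw [← pow_succ']
      congr 1
      omega
    have hWcard : (Set.toFinset (W : Set (Fin (n + 1) → ZMod 2))).card ≤ 2 * 2 ^ (n - 1) := by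
      rw [Set.toFinset_card]
      have e1 : Fintype.card (W : Set (Fin (n + 1) → ZMod 2)) = Fintype.card W :=
        Fintype.card_congr (Equiv.subtypeEquivRight (fun x => Iff.rfl))
      have e2 : Fintype.card W = 2 ^ (finrank (ZMod 2) W) := by
        have := card_eq_pow_finrank (K := ZMod 2) (V := W)
        simpa using this
      rw [e1, e2, ← hpow]
      calc (2:ℕ) ^ finrank (ZMod 2) W ≤ 2 ^ k :=
            Nat.pow_le_pow_right (by norm_num) (hW ▸ hdim)
        _ ≤ 2 ^ (n + 1 - 1) := Nat.pow_le_pow_right (by norm_num) (by omega)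
    obtain ⟨s, hscard, hssum⟩ :=
      halving (m := n + 1) (M := 2 ^ (n - 1)) (dvd_pow_self 2 (by omega : n - 1 ≠ 0)) W
        (Set.toFinset (W : Set (Fin (n + 1) → ZMod 2)))
        (fun x => by simp) hWcard (by rw [Fintype.card_fin, hpow]) v hvW hnz
    have hscardB : sᶜ.card = 2 ^ (n - 1) := by
      rw [card_compl, hscard, Fintype.card_fin, hpow]
      omega
    have hssumB : ∑ i ∈ sᶜ, v i = 0 := by
      have h1 := Finset.sum_add_sum_compl s v
      rw [hssum, zero_add, hsum] at h1
      exact h1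
    -- index equivalences
    let eA : Fin (2 ^ (n - 1)) ≃ {x // x ∈ s} := (s.equivFin.trans (finCongr hscard)).symm
    let eB : Fin (2 ^ (n - 1)) ≃ {x // x ∈ sᶜ} := (sᶜ.equivFin.trans (finCongr hscardB)).symm
    -- downstairs families
    let uA : Fin (2 ^ (n - 1)) → LinearMap.ker φ := fun jj => ⟨v (eA jj), hvker _⟩
    let uB : Fin (2 ^ (n - 1)) → LinearMap.ker φ := fun jj => ⟨v (eB jj), hvker _⟩
    let wA : Fin (2 ^ (n - 1)) → (Fin n → ZMod 2) := fun jj => κ (uA jj)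
    let wB : Fin (2 ^ (n - 1)) → (Fin n → ZMod 2) := fun jj => κ (uB jj)
    have hsumA : ∑ jj, wA jj = 0 := by
      have h1 : ∑ jj, uA jj = 0 := by
        apply Subtype.ext
        push_cast [wA, uA]
        rw [Equiv.sum_comp eA (fun x => v x.1)]
        rw [Finset.sum_coe_sort s v]
        exact hssum
      show ∑ jj, κ (uA jj) = 0
      rw [← map_sum, h1, map_zero]
    have hsumB : ∑ jj, wB jj = 0 := by
      have h1 : ∑ jj, uB jj = 0 := by
        apply Subtype.ext
        push_cast [wB, uB]
        rw [Equiv.sum_comp eB (fun x => v x.1)]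
        rw [Finset.sum_coe_sort sᶜ v]
        exact hssumB
      show ∑ jj, κ (uB jj) = 0
      rw [← map_sum, h1, map_zero]
    have hnzA : ∀ jj, wA jj ≠ 0 := by
      intro jj h
      have h1 : uA jj = 0 := by
        apply κ.injective
        rw [map_zero]
        exact h
      have h2 : v (eA jj) = 0 := congrArg Subtype.val h1
      exact hnz _ h2
    have hnzB : ∀ jj, wB jj ≠ 0 := by
      intro jj h
      have h1 : uB jj = 0 := by
        apply κ.injective
        rw [map_zero]
        exact h
      have h2 : v (eB jj) = 0 := congrArg Subtype.val h1
      exact hnz _ h2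
    have hdimA : finrank (ZMod 2) (span (ZMod 2) (Set.range wA)) ≤ k := by
      have e1 : finrank (ZMod 2) (span (ZMod 2) (Set.range wA)) =
          finrank (ZMod 2) (span (ZMod 2) (Set.range uA)) :=
        finrank_span_comp_eq' κ uA wA (fun a => rfl)
      have e2 : finrank (ZMod 2) (span (ZMod 2) (Set.range (fun jj => v (eA jj)))) =
          finrank (ZMod 2) (span (ZMod 2) (Set.range uA)) :=
        finrank_span_comp_eq (LinearMap.ker φ).subtype Subtype.coe_injective uA
          (fun jj => v (eA jj)) (fun a => rfl)
      have e3 : span (ZMod 2) (Set.range (fun jj => v (eA jj))) ≤ W :=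
        span_le.mpr (by rintro x ⟨jj, rfl⟩; exact hvW _)
      have e4 : finrank (ZMod 2) (span (ZMod 2) (Set.range (fun jj => v (eA jj)))) ≤
          finrank (ZMod 2) W := Submodule.finrank_mono e3
      rw [e1, ← e2]
      exact le_trans e4 hdim
    have hdimB : finrank (ZMod 2) (span (ZMod 2) (Set.range wB)) ≤ k := by
      have e1 : finrank (ZMod 2) (span (ZMod 2) (Set.range wB)) =
          finrank (ZMod 2) (span (ZMod 2) (Set.range uB)) :=
        finrank_span_comp_eq' κ uB wB (fun a => rfl)
      have e2 : finrank (ZMod 2) (span (ZMod 2) (Set.range (fun jj => v (eB jj)))) =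
          finrank (ZMod 2) (span (ZMod 2) (Set.range uB)) :=
        finrank_span_comp_eq (LinearMap.ker φ).subtype Subtype.coe_injective uB
          (fun jj => v (eB jj)) (fun a => rfl)
      have e3 : span (ZMod 2) (Set.range (fun jj => v (eB jj))) ≤ W :=
        span_le.mpr (by rintro x ⟨jj, rfl⟩; exact hvW _)
      have e4 : finrank (ZMod 2) (span (ZMod 2) (Set.range (fun jj => v (eB jj)))) ≤
          finrank (ZMod 2) W := Submodule.finrank_mono e3
      rw [e1, ← e2]
      exact le_trans e4 hdim
    obtain ⟨pA, qA, HA, hA⟩ := ih wA hnzA hsumA hdimA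
    obtain ⟨pB, qB, HB, hB⟩ := ih wB hnzB hsumB hdimB
    -- assemble
    let p : Fin (2 ^ (n + 1 - 1)) → (Fin (n + 1) → ZMod 2) := fun i =>
      if h : i ∈ s then (κ.symm (pA (eA.symm ⟨i, h⟩)) : Fin (n + 1) → ZMod 2)
      else x0 + (κ.symm (pB (eB.symm ⟨i, Finset.mem_compl.mpr h⟩)) : Fin (n + 1) → ZMod 2)
    let q : Fin (2 ^ (n + 1 - 1)) → (Fin (n + 1) → ZMod 2) := fun i =>
      if h : i ∈ s then (κ.symm (qA (eA.symm ⟨i, h⟩)) : Fin (n + 1) → ZMod 2)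
      else x0 + (κ.symm (qB (eB.symm ⟨i, Finset.mem_compl.mpr h⟩)) : Fin (n + 1) → ZMod 2)
    have hker0 : ∀ y : Fin n → ZMod 2,
        φ ((κ.symm y : LinearMap.ker φ) : Fin (n + 1) → ZMod 2) = 0 :=
      fun y => (κ.symm y).2
    have hpin : ∀ (i : Fin (2 ^ (n + 1 - 1))) (h : i ∈ s),
        p i = ((κ.symm (pA (eA.symm ⟨i, h⟩)) : LinearMap.ker φ) : Fin (n + 1) → ZMod 2) :=
      fun i h => dif_pos h
    have hqin : ∀ (i : Fin (2 ^ (n + 1 - 1))) (h : i ∈ s),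
        q i = ((κ.symm (qA (eA.symm ⟨i, h⟩)) : LinearMap.ker φ) : Fin (n + 1) → ZMod 2) :=
      fun i h => dif_pos h
    have hpout : ∀ (i : Fin (2 ^ (n + 1 - 1))) (h : ¬(i ∈ s)),
        p i = x0 + ((κ.symm (pB (eB.symm ⟨i, Finset.mem_compl.mpr h⟩)) :
          LinearMap.ker φ) : Fin (n + 1) → ZMod 2) :=
      fun i h => dif_neg h
    have hqout : ∀ (i : Fin (2 ^ (n + 1 - 1))) (h : ¬(i ∈ s)),
        q i = x0 + ((κ.symm (qB (eB.symm ⟨i, Finset.mem_compl.mpr h⟩)) :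
          LinearMap.ker φ) : Fin (n + 1) → ZMod 2) :=
      fun i h => dif_neg h
    refine ⟨p, q, ?_, ?_⟩
    · rw [PairPartition, Fintype.bijective_iff_injective_and_card]
      constructor
      · -- injectivity
        have hlev : ∀ (i : Fin (2 ^ (n + 1 - 1))) (b : Bool),
            φ (if b then p i else q i) = if i ∈ s then 0 else 1 := by
          intro i b
          by_cases h : i ∈ s
          · rw [if_pos h]
            cases b
            · show φ (q i) = 0
              rw [hqin i h]; exact hker0 _
            · show φ (p i) = 0
              rw [hpin i h]; exact hker0 _
          · rw [if_neg h]
            cases b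
            · show φ (q i) = 1
              rw [hqout i h, map_add, hker0, hcφ, add_zero]
            · show φ (p i) = 1
              rw [hpout i h, map_add, hker0, hcφ, add_zero]
        rintro ⟨i, b⟩ ⟨i', b'⟩ hE
        dsimp only at hE
        by_cases h : i ∈ s <;> by_cases h' : i' ∈ s
        · -- both in s
          rw [Prod.mk.injEq]
          cases b <;> cases b'
          · rw [if_neg (by decide : ¬((false:Bool) = true))] at hE
            rw [hqin i h, hqin i' h'] at hE
            have e0 : qA (eA.symm ⟨i, h⟩) = qA (eA.symm ⟨i', h'⟩) :=
              κ.symm.injective (Subtype.coe_injective hE)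
            have e1 := HA.injective (a₁ := (eA.symm ⟨i, h⟩, false))
              (a₂ := (eA.symm ⟨i', h'⟩, false)) e0
            have e2 : eA.symm ⟨i, h⟩ = eA.symm ⟨i', h'⟩ := congrArg Prod.fst e1
            exact ⟨congrArg Subtype.val (eA.symm.injective e2), rfl⟩
          · rw [if_neg (by decide : ¬((false:Bool) = true)),
              if_pos (by decide : (true:Bool) = true)] at hE
            rw [hqin i h, hpin i' h'] at hE
            have e0 : qA (eA.symm ⟨i, h⟩) = pA (eA.symm ⟨i', h'⟩) :=
              κ.symm.injective (Subtype.coe_injective hE)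
            have e1 := HA.injective (a₁ := (eA.symm ⟨i, h⟩, false))
              (a₂ := (eA.symm ⟨i', h'⟩, true)) e0
            have e5 : (false : Bool) = true := congrArg Prod.snd e1
            exact absurd e5 (by decide)
          · rw [if_neg (by decide : ¬((false:Bool) = true)),
              if_pos (by decide : (true:Bool) = true)] at hE
            rw [hpin i h, hqin i' h'] at hE
            have e0 : pA (eA.symm ⟨i, h⟩) = qA (eA.symm ⟨i', h'⟩) :=
              κ.symm.injective (Subtype.coe_injective hE)
            have e1 := HA.injective (a₁ := (eA.symm ⟨i, h⟩, true))
              (a₂ := (eA.symm ⟨i', h'⟩, false)) e0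
            have e5 : (true : Bool) = false := congrArg Prod.snd e1
            exact absurd e5 (by decide)
          · rw [if_pos (by decide : (true:Bool) = true)] at hE
            rw [hpin i h, hpin i' h'] at hE
            have e0 : pA (eA.symm ⟨i, h⟩) = pA (eA.symm ⟨i', h'⟩) :=
              κ.symm.injective (Subtype.coe_injective hE)
            have e1 := HA.injective (a₁ := (eA.symm ⟨i, h⟩, true))
              (a₂ := (eA.symm ⟨i', h'⟩, true)) e0
            have e2 : eA.symm ⟨i, h⟩ = eA.symm ⟨i', h'⟩ := congrArg Prod.fst e1
            exact ⟨congrArg Subtype.val (eA.symm.injective e2), rfl⟩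
        · exfalso
          have l1 := hlev i b
          rw [hE, hlev i' b', if_neg h', if_pos h] at l1
          exact absurd l1 (by decide)
        · exfalso
          have l1 := hlev i b
          rw [hE, hlev i' b', if_pos h', if_neg h] at l1
          exact absurd l1 (by decide)
        · -- both out of s
          rw [Prod.mk.injEq]
          cases b <;> cases b'
          · rw [if_neg (by decide : ¬((false:Bool) = true))] at hE
            rw [hqout i h, hqout i' h'] at hE
            have e0 : qB (eB.symm ⟨i, Finset.mem_compl.mpr h⟩) =
                qB (eB.symm ⟨i', Finset.mem_compl.mpr h'⟩) :=
              κ.symm.injective (Subtype.coe_injective (add_left_cancel hE))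
            have e1 := HB.injective (a₁ := (eB.symm ⟨i, Finset.mem_compl.mpr h⟩, false))
              (a₂ := (eB.symm ⟨i', Finset.mem_compl.mpr h'⟩, false)) e0
            have e2 : eB.symm ⟨i, Finset.mem_compl.mpr h⟩ = eB.symm ⟨i', Finset.mem_compl.mpr h'⟩ :=
              congrArg Prod.fst e1
            exact ⟨congrArg Subtype.val (eB.symm.injective e2), rfl⟩
          · rw [if_neg (by decide : ¬((false:Bool) = true)),
              if_pos (by decide : (true:Bool) = true)] at hE
            rw [hqout i h, hpout i' h'] at hE
            have e0 : qB (eB.symm ⟨i, Finset.mem_compl.mpr h⟩) =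
                pB (eB.symm ⟨i', Finset.mem_compl.mpr h'⟩) :=
              κ.symm.injective (Subtype.coe_injective (add_left_cancel hE))
            have e1 := HB.injective (a₁ := (eB.symm ⟨i, Finset.mem_compl.mpr h⟩, false))
              (a₂ := (eB.symm ⟨i', Finset.mem_compl.mpr h'⟩, true)) e0
            have e5 : (false : Bool) = true := congrArg Prod.snd e1
            exact absurd e5 (by decide)
          · rw [if_neg (by decide : ¬((false:Bool) = true)),
              if_pos (by decide : (true:Bool) = true)] at hE
            rw [hpout i h, hqout i' h'] at hE
            have e0 : pB (eB.symm ⟨i, Finset.mem_compl.mpr h⟩) =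
                qB (eB.symm ⟨i', Finset.mem_compl.mpr h'⟩) :=
              κ.symm.injective (Subtype.coe_injective (add_left_cancel hE))
            have e1 := HB.injective (a₁ := (eB.symm ⟨i, Finset.mem_compl.mpr h⟩, true))
              (a₂ := (eB.symm ⟨i', Finset.mem_compl.mpr h'⟩, false)) e0
            have e5 : (true : Bool) = false := congrArg Prod.snd e1
            exact absurd e5 (by decide)
          · rw [if_pos (by decide : (true:Bool) = true)] at hE
            rw [hpout i h, hpout i' h'] at hE
            have e0 : pB (eB.symm ⟨i, Finset.mem_compl.mpr h⟩) =
                pB (eB.symm ⟨i', Finset.mem_compl.mpr h'⟩) :=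
              κ.symm.injective (Subtype.coe_injective (add_left_cancel hE))
            have e1 := HB.injective (a₁ := (eB.symm ⟨i, Finset.mem_compl.mpr h⟩, true))
              (a₂ := (eB.symm ⟨i', Finset.mem_compl.mpr h'⟩, true)) e0
            have e2 : eB.symm ⟨i, Finset.mem_compl.mpr h⟩ = eB.symm ⟨i', Finset.mem_compl.mpr h'⟩ :=
              congrArg Prod.fst e1
            exact ⟨congrArg Subtype.val (eB.symm.injective e2), rfl⟩
      · -- cardinality
        have h1 : Fintype.card (Fin (2 ^ (n + 1 - 1)) × Bool) = 2 ^ (n + 1 - 1) * 2 := by simp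
        have h2 : Fintype.card (Fin (n + 1) → ZMod 2) = 2 ^ (n + 1) := by
          simp [Fintype.card_fun]
        rw [h1, h2, hpow]
        have h3 : 2 * 2 ^ (n - 1) * 2 = 2 ^ (n - 1) * 2 * 2 := by ring
        rw [h3, ← pow_succ, ← pow_succ]
        congr 1
        omega
    · -- sums
      intro i
      by_cases h : i ∈ s
      · show (p i) + (q i) = v i
        rw [hpin i h, hqin i h, ← Submodule.coe_add, ← map_add, hA]
        show ((κ.symm (κ (uA (eA.symm ⟨i, h⟩))) : LinearMap.ker φ) : Fin (n + 1) → ZMod 2) = v i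
        rw [LinearEquiv.symm_apply_apply]
        show v (eA (eA.symm ⟨i, h⟩)) = v i
        rw [Equiv.apply_symm_apply]
      · show (p i) + (q i) = v i
        rw [hpout i h, hqout i h]
        have rearr : ∀ X Y : Fin (n + 1) → ZMod 2, (x0 + X) + (x0 + Y) = (x0 + x0) + (X + Y) :=
          fun X Y => by abel
        rw [rearr, zmod2_addself, zero_add, ← Submodule.coe_add, ← map_add, hB]
        show ((κ.symm (κ (uB (eB.symm ⟨i, Finset.mem_compl.mpr h⟩))) :
            LinearMap.ker φ) : Fin (n + 1) → ZMod 2) = v i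
        rw [LinearEquiv.symm_apply_apply]
        show v (eB (eB.symm ⟨i, Finset.mem_compl.mpr h⟩)) = v i
        rw [Equiv.apply_symm_apply]


/-- If the pairing conjecture holds in `F_2^k`, then it holds for any `2^{n-1}` nonzero
vectors in `F_2^n` (`n ≥ k`) with sum zero whose span has dimension at most `k`. -/
theorem pairing_of_span_dim_le (k n : ℕ) (hconj : PairingConj k) (hkn : k ≤ n)
    (v : Fin (2 ^ (n - 1)) → (Fin n → ZMod 2))
    (hnz : ∀ i, v i ≠ 0) (hsum : ∑ i, v i = 0)
    (hdim : Module.finrank (ZMod 2) (Submodule.span (ZMod 2) (Set.range v)) ≤ k) :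
    ∃ p q : Fin (2 ^ (n - 1)) → (Fin n → ZMod 2),
      PairPartition n p q ∧ ∀ i, p i + q i = v i := by
  classical
  rcases Nat.lt_or_ge k 2 with hk | hk
  · have i0 : Fin (2 ^ (n - 1)) := ⟨0, Nat.two_pow_pos _⟩
    interval_cases k
    · exfalso
      have h0 : span (ZMod 2) (Set.range v) = ⊥ :=
        Submodule.finrank_eq_zero.mp (Nat.le_zero.mp hdim)
      have h1 : v i0 ∈ span (ZMod 2) (Set.range v) := subset_span (Set.mem_range_self i0)
      rw [h0, Submodule.mem_bot] at h1
      exact hnz i0 h1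
    · -- k = 1 : all the vectors are equal
      have hsame : ∀ i, v i = v i0 := by
        intro i
        by_contra hne
        haveI : Fintype (span (ZMod 2) (Set.range v)) := Fintype.ofFinite _
        have hle : Fintype.card (span (ZMod 2) (Set.range v)) ≤ 2 := by
          have e2 : Fintype.card (span (ZMod 2) (Set.range v)) =
              2 ^ finrank (ZMod 2) (span (ZMod 2) (Set.range v)) := by
            have := card_eq_pow_finrank (K := ZMod 2) (V := span (ZMod 2) (Set.range v))
            simpa using this
          rw [e2]
          calc (2:ℕ) ^ finrank (ZMod 2) (span (ZMod 2) (Set.range v)) ≤ 2 ^ 1 :=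
                Nat.pow_le_pow_right (by norm_num) hdim
            _ = 2 := rfl
        let a0 : span (ZMod 2) (Set.range v) := ⟨0, Submodule.zero_mem _⟩
        let a1 : span (ZMod 2) (Set.range v) := ⟨v i0, subset_span (Set.mem_range_self i0)⟩
        let a2 : span (ZMod 2) (Set.range v) := ⟨v i, subset_span (Set.mem_range_self i)⟩
        have d01 : a0 ≠ a1 := fun h => hnz i0 (congrArg Subtype.val h).symm
        have d02 : a0 ≠ a2 := fun h => hnz i (congrArg Subtype.val h).symm
        have d12 : a1 ≠ a2 := fun h => hne (congrArg Subtype.val h).symm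
        have hcard3 : ({a0, a1, a2} : Finset (span (ZMod 2) (Set.range v))).card = 3 := by
          rw [Finset.card_insert_of_notMem (by simp [d01, d02]),
            Finset.card_insert_of_notMem (by simp [d12]), Finset.card_singleton]
        have hle3 := Finset.card_le_univ ({a0, a1, a2} : Finset (span (ZMod 2) (Set.range v)))
        rw [hcard3] at hle3
        omega
      obtain ⟨p, q, H, hpq⟩ := pairing_const (v i0) (hnz i0)
      exact ⟨p, q, H, fun i => by rw [hsame i]; exact hpq i⟩
  · exact aux k hk hconj n hkn v hnz hsum hdim
end

section
/- Let n ≥ 3 and let v_1, ..., v_{2^{n-1}} be nonzero vectors in F_2^n with sum zero whose span has dimension strictly less than n. Then the multiset {v_1, ..., v_{2^{n-1}}} can be partitioned into two multisets of size 2^{n-2} each, such that the sum of the elements in each multiset is zero. -/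
/-!
Let `2k` be the number of vectors and `W` their span, so `|W| ≤ 2k`. Pair off equal vectors as far
as possible: what remains is a set `U` of indices on which `v` is injective with values in
`W \ {0}`, so `|U| < 2k`, and the paired indices come in zero-sum pairs. A zero-sum half is made
of `j` disjoint zero-sum quadruples inside `v(U)` together with `(k - 4j)/2` pairs, which needs
`|U| - k ≤ 4j ≤ k`. The quadruples exist because as long as `T ⊆ W` has `2|T| ≥ |W| + 3`,
for `a ≠ b` in `T` the translate `a + b + T` meets `T` in some `c ∉ {a, b}`, and then
`{a, b, c, a + b + c}` sums to zero.
-/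

open Finset

section ElementaryAbelianTwo

variable {V : Type*} [AddCommGroup V]

lemma AddSubgroup.card_finset_le_natCard {W : AddSubgroup V} [Finite W] {T : Finset V}
    (hTW : (T : Set V) ⊆ W) : #T ≤ Nat.card W := by
  rw [← Nat.card_eq_finsetCard]
  exact Nat.card_mono (Set.toFinite _) hTW

variable [DecidableEq V]

lemma exists_zero_sum_subset_card_four (h2 : ∀ x : V, x + x = 0) {W : AddSubgroup V} [Finite W]
    {T : Finset V} (hTW : (T : Set V) ⊆ W) (hT : Nat.card W + 3 ≤ 2 * #T) :
    ∃ Q ⊆ T, #Q = 4 ∧ ∑ x ∈ Q, x = 0 := by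
  obtain ⟨a, ha, b, hb, hab⟩ : ∃ a ∈ T, ∃ b ∈ T, a ≠ b := one_lt_card.mp (by omega)
  have hx : a + b ≠ 0 := fun h => hab (by rw [← add_right_cancel_iff (a := b), h2, h])
  have hinter : 2 < #(T ∩ T.image (a + b + ·)) := by
    have hunion : #(T ∪ T.image (a + b + ·)) ≤ Nat.card W :=
      AddSubgroup.card_finset_le_natCard <| by
        simp only [coe_union, coe_image, Set.union_subset_iff, Set.image_subset_iff]
        exact ⟨hTW, fun y hy => W.add_mem (W.add_mem (hTW ha) (hTW hb)) (hTW hy)⟩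
    have := card_union_add_card_inter T (T.image (a + b + ·))
    rw [card_image_of_injective _ (add_right_injective _)] at this
    omega
  obtain ⟨c, hc, hcab⟩ : ∃ c ∈ T ∩ T.image (a + b + ·), c ∉ ({a, b} : Finset V) :=
    exists_mem_notMem_of_card_lt_card ((card_le_two).trans_lt hinter)
  simp only [mem_inter, mem_image, mem_insert, mem_singleton, not_or] at hc hcab
  obtain ⟨hcT, y, hyT, rfl⟩ := hc
  obtain ⟨hca, hcb⟩ := hcab
  have hya : y ≠ a := by
    rintro rfl
    exact hcb (by rw [add_comm y b, add_assoc, h2, add_zero])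
  have hyb : y ≠ b := by
    rintro rfl
    exact hca (by rw [add_assoc, h2, add_zero])
  have hyx : a + b + y ≠ y := fun h => hx (by simpa using h)
  refine ⟨{a, b, a + b + y, y}, ?_, ?_, ?_⟩
  · simp [insert_subset_iff, ha, hb, hcT, hyT]
  · exact card_eq_four.mpr ⟨a, b, a + b + y, y, hab, Ne.symm hca, hya.symm, Ne.symm hcb,
      hyb.symm, hyx, rfl⟩
  · rw [sum_insert (by simp [hab, Ne.symm hca, hya.symm]),
      sum_insert (by simp [Ne.symm hcb, hyb.symm]), sum_insert (by simpa using hyx), sum_singleton,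
      show a + (b + (a + b + y + y)) = a + b + (a + b) + (y + y) by abel, h2, h2, add_zero]

lemma exists_zero_sum_subset_card_four_mul (h2 : ∀ x : V, x + x = 0) {W : AddSubgroup V}
    [Finite W] (j : ℕ) {T : Finset V} (hTW : (T : Set V) ⊆ W)
    (hj : 8 * j ≤ 2 * #T + 5 - Nat.card W) : ∃ S ⊆ T, #S = 4 * j ∧ ∑ x ∈ S, x = 0 := by
  induction j generalizing T with
  | zero => exact ⟨∅, empty_subset _, rfl, sum_empty⟩
  | succ j ih =>
    obtain ⟨Q, hQT, hQcard, hQsum⟩ := exists_zero_sum_subset_card_four h2 hTW (by omega)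
    obtain ⟨S, hST, hScard, hSsum⟩ := ih (T := T \ Q) (subset_trans (by simp) hTW)
      (by rw [card_sdiff_of_subset hQT]; omega)
    have hdisj : Disjoint Q S := disjoint_of_subset_right hST disjoint_sdiff
    refine ⟨Q ∪ S, union_subset hQT (hST.trans sdiff_subset), ?_, ?_⟩
    · rw [card_union_of_disjoint hdisj]
      omega
    · rw [sum_union hdisj, hQsum, hSsum, add_zero]

omit [DecidableEq V] in
lemma exists_injOn_of_sdiff_pairs {ι : Type*} [DecidableEq ι] (h2 : ∀ x : V, x + x = 0)
    (v : ι → V) (s : Finset ι) :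
    ∃ U ⊆ s, Set.InjOn v U ∧ Even #(s \ U) ∧
      ∀ p, 2 * p ≤ #(s \ U) → ∃ B ⊆ s \ U, #B = 2 * p ∧ ∑ i ∈ B, v i = 0 := by
  induction s using Finset.strongInduction with | H s ih =>
  by_cases hinj : Set.InjOn v s
  · refine ⟨s, subset_rfl, hinj, by simp, fun p hp => ⟨∅, empty_subset _, ?_, sum_empty⟩⟩
    simp_all
  obtain ⟨i, hi, j, hj, hvij, hij⟩ : ∃ i ∈ s, ∃ j ∈ s, v i = v j ∧ i ≠ j := by
    simpa [Set.InjOn] using hinj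
  obtain ⟨U, hU, hinjU, heven, hpairs⟩ := 
    ih (s \ {i, j}) (sdiff_ssubset (by simp [insert_subset_iff, hi, hj]) (by simp))
  have hsplit : s \ U = {i, j} ∪ (s \ {i, j}) \ U := by
    ext x
    have := @hU x
    simp only [mem_sdiff, mem_union, mem_insert, mem_singleton] at this ⊢
    grind
  have hdisj : Disjoint {i, j} ((s \ {i, j}) \ U) :=
    disjoint_of_subset_right sdiff_subset disjoint_sdiff
  have hcard : #(s \ U) = #((s \ {i, j}) \ U) + 2 := by
    rw [hsplit, card_union_of_disjoint hdisj, card_pair hij, add_comm]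
  refine ⟨U, hU.trans sdiff_subset, hinjU, by rw [hcard]; exact heven.add even_two, ?_⟩
  rintro (_ | p) hp
  · exact ⟨∅, empty_subset _, rfl, sum_empty⟩
  obtain ⟨B, hB, hBcard, hBsum⟩ := hpairs p (by omega)
  have hdisjB : Disjoint {i, j} B := disjoint_of_subset_right hB hdisj
  refine ⟨{i, j} ∪ B, hsplit ▸ union_subset_union subset_rfl hB, ?_, ?_⟩
  · rw [card_union_of_disjoint hdisjB, card_pair hij]
    omega
  · rw [sum_union hdisjB, sum_pair hij, hBsum, hvij, h2, add_zero]

theorem exists_card_eq_half_sum_eq_zero (h2 : ∀ x : V, x + x = 0) {W : AddSubgroup V} [Finite W]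
    {ι : Type*} [Fintype ι] [DecidableEq ι] (v : ι → V) {k : ℕ} (hk : Even k)
    (hι : Fintype.card ι = 2 * k) (hvW : ∀ i, v i ∈ W) (hv0 : ∀ i, v i ≠ 0)
    (hW : Nat.card W ≤ 2 * k) : ∃ A : Finset ι, #A = k ∧ ∑ i ∈ A, v i = 0 := by
  obtain ⟨U, -, hinj, heven, hpairs⟩ := exists_injOn_of_sdiff_pairs h2 v univ
  have hTW : (U.image v : Set V) ⊆ W := by
    rw [coe_image, Set.image_subset_iff]
    exact fun i _ => hvW i
  have hU : #U + 1 ≤ Nat.card W := by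
    rw [← card_image_of_injOn hinj, ← card_insert_of_notMem (a := 0) (by simp [hv0])]
    exact AddSubgroup.card_finset_le_natCard <| by
      rw [coe_insert]
      exact Set.insert_subset W.zero_mem hTW
  have hcard : #(univ \ U) + #U = 2 * k := by
    rw [card_sdiff_add_card_eq_card (subset_univ U), card_univ, hι]
  obtain ⟨r, hr⟩ := heven
  obtain ⟨l, rfl⟩ := hk
  -- the least `j` with `#U ≤ k + 4 * j`; `4 * j ≤ k` as `#U` is even and `#U < 2 * k`
  obtain ⟨j, hj⟩ : ∃ j, j = (#U + 2 - (l + l)) / 4 := ⟨_, rfl⟩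
  obtain ⟨S', hS'U, hS'card, hS'sum⟩ :=
    exists_zero_sum_subset_card_four_mul h2 j hTW (by rw [card_image_of_injOn hinj]; omega)
  obtain ⟨S, hSU, rfl⟩ := subset_image_iff.mp hS'U
  have hinjS : Set.InjOn v S := hinj.mono (coe_subset.mpr hSU)
  rw [card_image_of_injOn hinjS] at hS'card
  rw [sum_image hinjS] at hS'sum
  obtain ⟨B, hB, hBcard, hBsum⟩ := hpairs ((l + l - 4 * j) / 2) (by omega)
  have hdisj : Disjoint S B :=
    disjoint_of_subset_left hSU (disjoint_of_subset_right hB disjoint_sdiff)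
  refine ⟨S ∪ B, ?_, by rw [sum_union hdisj, hS'sum, hBsum, add_zero]⟩
  rw [card_union_of_disjoint hdisj, hS'card, hBcard]
  omega

end ElementaryAbelianTwo

/-- For `n ≥ 3` and `2^{n-1}` nonzero vectors in `F_2^n` with sum zero whose span has
dimension strictly less than `n`, the index set can be partitioned into two halves of
size `2^{n-2}` whose vector-sums are each zero. -/
theorem partition_into_two_zero_sum_halves (n : ℕ) (hn : 3 ≤ n)
    (v : Fin (2 ^ (n - 1)) → (Fin n → ZMod 2))
    (hnz : ∀ i, v i ≠ 0) (hsum : ∑ i, v i = 0)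
    (hdim : Module.finrank (ZMod 2) (Submodule.span (ZMod 2) (Set.range v)) < n) :
    ∃ A : Finset (Fin (2 ^ (n - 1))), A.card = 2 ^ (n - 2) ∧
      ∑ i ∈ A, v i = 0 ∧ ∑ i ∈ Aᶜ, v i = 0 := by
  have hhalf : 2 ^ (n - 1) = 2 * 2 ^ (n - 2) := by
    rw [← pow_succ']
    congr 1
    omega
  have hspan : Nat.card (Submodule.span (ZMod 2) (Set.range v)) ≤ 2 * 2 ^ (n - 2) := by
    rw [Module.natCard_eq_pow_finrank (K := ZMod 2), Nat.card_zmod, ← hhalf]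
    exact Nat.pow_le_pow_right two_pos (by omega)
  obtain ⟨A, hAcard, hAsum⟩ := exists_card_eq_half_sum_eq_zero
    (fun x => funext fun i => CharTwo.add_self_eq_zero (x i))
    (W := (Submodule.span (ZMod 2) (Set.range v)).toAddSubgroup) v
    ((Nat.even_pow' (by omega)).mpr even_two) (by rw [Fintype.card_fin, hhalf])
    (fun i => Submodule.subset_span ⟨i, rfl⟩) hnz hspan
  refine ⟨A, hAcard, hAsum, ?_⟩
  rw [← hsum, ← sum_compl_add_sum A, hAsum, add_zero]
end

section
/- Let v_1, ..., v_{2^{n-1}} be nonzero vectors in F_2^n with v_{2i-1} = v_{2i} for all 1 ≤ i ≤ 2^{n-2}, and suppose there are at most l < n distinct values among the v_i. Then, assuming the pairing conjecture holds in F_2^2 through F_2^5, there exists a partition of F_2^n into pairs (p_i, q_i) with p_i + q_i = v_i for all 1 ≤ i ≤ 2^{n-1}. -/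
/-!
Group the `v_i` as `w_j = v_{2j-1} = v_{2j}` and induct on the dimension `n`. Up to `n = 5` the
pairing conjecture applies directly, since every value occurs an even number of times and so the
sum vanishes. For `n ≥ 6`, split the `w_j` into two halves of size `2^{n-3}`, each avoiding one of
the at most `n - 1` values: at most one value occurs more than `2^{n-3}` times, so two values
`x ≠ y` occur at most that often, and one half takes all copies of `x` and none of `y`. The at most
`n - 1` values lie in a hyperplane `H`. By induction both halves, doubled, are pair sums of
partitions of `H`; translating the second partition by some `e ∉ H` gives a partition of the coset
`H + e` with the same pair sums, since `e + e = 0`, and the two together partition `F_2^n`.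
-/

open Finset Module

section Pairing

variable {ι ι' V V' : Type*}

def IsPairPartition (p q : ι → V) : Prop :=
  Function.Bijective (fun x : ι × Bool => if x.2 then p x.1 else q x.1)

def IsPairSums [Add V] (v : ι → V) : Prop :=
  ∃ p q : ι → V, IsPairPartition p q ∧ ∀ i, p i + q i = v i

theorem IsPairPartition.comp_equiv {p q : ι → V} (h : IsPairPartition p q) (σ : ι' ≃ ι) :
    IsPairPartition (p ∘ σ) (q ∘ σ) :=
  h.comp (Equiv.prodCongr σ (Equiv.refl Bool)).bijective

theorem IsPairPartition.map_equiv {p q : ι → V} (h : IsPairPartition p q) (φ : V ≃ V') :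
    IsPairPartition (φ ∘ p) (φ ∘ q) := by
  have hcomp : (fun x : ι × Bool => if x.2 then φ (p x.1) else φ (q x.1)) =
      φ ∘ fun x => if x.2 then p x.1 else q x.1 :=
    funext fun x => (apply_ite φ _ _ _).symm
  simpa only [IsPairPartition, Function.comp_apply, hcomp] using φ.bijective.comp h

theorem IsPairSums.comp_equiv [Add V] {v : ι → V} (h : IsPairSums v) (σ : ι' ≃ ι) :
    IsPairSums (v ∘ σ) :=
  let ⟨p, q, hpq, hv⟩ := h
  ⟨p ∘ σ, q ∘ σ, hpq.comp_equiv σ, fun i => hv (σ i)⟩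

theorem IsPairSums.map_addEquiv [Add V] [Add V'] {v : ι → V} (h : IsPairSums v) (φ : V ≃+ V') :
    IsPairSums (φ ∘ v) :=
  let ⟨p, q, hpq, hv⟩ := h
  ⟨φ ∘ p, φ ∘ q, hpq.map_equiv φ.toEquiv, fun i => by simp [← hv i]⟩

theorem IsPairSums.sumElim [AddCommGroup V] {S : Type*} [SetLike S V] [AddSubmonoidClass S V]
    {W : S} {e : V} (he : e + e = 0)
    (hV : Function.Bijective (Sum.elim (fun w : W => (w : V)) (fun w : W => (w : V) + e)))
    {ι₁ ι₂ : Type*} {u₁ : ι₁ → W} {u₂ : ι₂ → W} (h₁ : IsPairSums u₁) (h₂ : IsPairSums u₂) :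
    IsPairSums (Sum.elim (fun i => (u₁ i : V)) (fun i => (u₂ i : V))) := by
  obtain ⟨p₁, q₁, hpq₁, hu₁⟩ := h₁
  obtain ⟨p₂, q₂, hpq₂, hu₂⟩ := h₂
  refine ⟨Sum.elim (fun i => (p₁ i : V)) (fun i => (p₂ i : V) + e),
    Sum.elim (fun i => (q₁ i : V)) (fun i => (q₂ i : V) + e), ?_, ?_⟩
  · have hcomp : (fun x : (ι₁ ⊕ ι₂) × Bool => if x.2 then
          Sum.elim (fun i => (p₁ i : V)) (fun i => (p₂ i : V) + e) x.1 else
          Sum.elim (fun i => (q₁ i : V)) (fun i => (q₂ i : V) + e) x.1) =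
        Sum.elim (fun w : W => (w : V)) (fun w : W => (w : V) + e) ∘
          Sum.map (fun x : ι₁ × Bool => if x.2 then p₁ x.1 else q₁ x.1)
            (fun x : ι₂ × Bool => if x.2 then p₂ x.1 else q₂ x.1) ∘
          Equiv.sumProdDistrib ι₁ ι₂ Bool := by
      funext x
      rcases x with ⟨i | i, _ | _⟩ <;> rfl
    rw [IsPairPartition, hcomp]
    exact (hV.comp (hpq₁.sumMap hpq₂)).comp (Equiv.bijective _)
  · rintro (i | i)
    · simp [← hu₁ i]
    · simp only [Sum.elim_inr, ← hu₂ i, AddMemClass.coe_add]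
      rw [add_add_add_comm, he, add_zero]

end Pairing

theorem add_self_eq_zero_of_module_zmod_two {V : Type*} [AddCommGroup V] [Module (ZMod 2) V]
    (x : V) : x + x = 0 := by
  rw [← two_smul (ZMod 2) x, show (2 : ZMod 2) = 0 from rfl, zero_smul]

theorem Module.Dual.bijective_sumElim_ker {V : Type*} [AddCommGroup V] [Module (ZMod 2) V]
    (f : Module.Dual (ZMod 2) V) {e : V} (he : f e ≠ 0) :
    Function.Bijective (Sum.elim (fun w : LinearMap.ker f => (w : V))
      (fun w : LinearMap.ker f => (w : V) + e)) := by
  have hnz : ∀ a b : ZMod 2, a ≠ 0 → b ≠ 0 → a + b = 0 := by decide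
  refine ⟨Subtype.val_injective.sumElim (add_left_injective e |>.comp Subtype.val_injective) ?_,
    fun z => ?_⟩
  · rintro ⟨a, ha⟩ ⟨b, hb⟩ hab
    have hfa : f a = 0 := ha
    have hfb : f b = 0 := hb
    have hab' : a = b + e := hab
    rw [hab', map_add, hfb, zero_add] at hfa
    exact he hfa
  · by_cases hz : f z = 0
    · exact ⟨Sum.inl ⟨z, hz⟩, rfl⟩
    · refine ⟨Sum.inr ⟨z + e, ?_⟩, ?_⟩
      · simp [LinearMap.mem_ker, hnz _ _ hz he]
      · simp [add_assoc, add_self_eq_zero_of_module_zmod_two]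

theorem Finset.exists_dual_ne_zero_of_card_lt_finrank {K V : Type*} [Field K] [AddCommGroup V]
    [Module K V] [FiniteDimensional K V] (S : Finset V) (hS : #S < finrank K V) :
    ∃ f : Module.Dual K V, f ≠ 0 ∧ ∀ x ∈ S, f x = 0 := by
  have hlt : Submodule.span K (S : Set V) < ⊤ := by
    refine lt_top_iff_ne_top.mpr fun htop => hS.not_ge ?_
    have := finrank_span_finset_le_card (R := K) S
    rwa [Set.finrank, htop, finrank_top] at this
  obtain ⟨f, hf, hfS⟩ := Submodule.exists_dual_map_eq_bot_of_lt_top hlt inferInstance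
  refine ⟨f, hf, fun x hx => ?_⟩
  have : f x ∈ (Submodule.span K (S : Set V)).map f :=
    Submodule.mem_map_of_mem (Submodule.subset_span hx)
  rwa [hfS, Submodule.mem_bot] at this

section Split

variable {κ α : Type*} [Fintype κ] [DecidableEq α]

theorem exists_two_fibers_card_le (w : κ → α) {S : Finset α} (hS : ∀ i, w i ∈ S)
    (h3 : 3 ≤ #S) {s : ℕ} (hκ : Fintype.card κ = 2 * s) :
    ∃ x ∈ S, ∃ y ∈ S, x ≠ y ∧ #{i | w i = x} ≤ s ∧ #{i | w i = y} ≤ s := by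
  set big := {a ∈ S | s < #{i | w i = a}}
  have hbig : #big ≤ 1 := by
    have hsum : ∑ a ∈ big, #{i | w i = a} ≤ 2 * s := by
      rw [← hκ, ← card_univ, card_eq_sum_card_fiberwise (t := S) fun i _ => hS i]
      exact sum_le_sum_of_subset (filter_subset _ _)
    have := card_nsmul_le_sum big (fun a => #{i | w i = a}) (s + 1)
      fun a ha => (mem_filter.mp ha).2
    rw [smul_eq_mul] at this
    nlinarith
  obtain ⟨x, hx, y, hy, hxy⟩ := one_lt_card.mp
    (show 1 < #(S \ big) by have := le_card_sdiff big S; omega)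
  simp only [big, mem_sdiff, mem_filter, not_and, not_lt] at hx hy
  exact ⟨x, hx.1, y, hy.1, hxy, hx.2 hx.1, hy.2 hy.1⟩

theorem exists_card_eq_of_fibers_card_le [DecidableEq κ] (w : κ → α) {x y : α} (hxy : x ≠ y)
    {s : ℕ} (hκ : Fintype.card κ = 2 * s) (hx : #{i | w i = x} ≤ s) (hy : #{i | w i = y} ≤ s) :
    ∃ T : Finset κ, #T = s ∧ (∀ i ∈ T, w i ≠ y) ∧ ∀ i ∉ T, w i ≠ x := by
  set X : Finset κ := {i | w i = x}
  set Y : Finset κ := {i | w i = y}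
  set R : Finset κ := {i | w i ≠ x ∧ w i ≠ y}
  have hcover : 2 * s ≤ #R + #X + #Y := by
    calc 2 * s = #(R ∪ X ∪ Y) := by
          rw [← hκ, ← card_univ]; congr 1; ext i; simp only [R, X, Y, mem_union, mem_filter,
            mem_univ, true_and]; tauto
      _ ≤ _ := (card_union_le _ _).trans (by gcongr; exact card_union_le _ _)
  obtain ⟨C, hCR, hC⟩ := exists_subset_card_eq (show s - #X ≤ #R by omega)
  have hXC : Disjoint X C := disjoint_left.mpr fun i hi hiC =>
    (mem_filter.mp (hCR hiC)).2.1 (mem_filter.mp hi).2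
  refine ⟨X ∪ C, by rw [card_union_of_disjoint hXC]; omega, fun i hi => ?_, fun i hi => ?_⟩
  · rcases mem_union.mp hi with hi | hi
    · rw [(mem_filter.mp hi).2]; exact hxy
    · exact (mem_filter.mp (hCR hi)).2.2
  · exact fun hix => hi (mem_union_left _ (mem_filter.mpr ⟨mem_univ _, hix⟩))

theorem exists_split_fewer_values [DecidableEq κ] (w : κ → α) {S : Finset α}
    (hS : ∀ i, w i ∈ S) {d s : ℕ} (hd : 2 ≤ d) (hSd : #S ≤ d + 1) (hκ : Fintype.card κ = 2 * s) :
    ∃ T : Finset κ, #T = s ∧ (∃ S₁ : Finset α, #S₁ ≤ d ∧ ∀ i ∈ T, w i ∈ S₁) ∧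
      ∃ S₂ : Finset α, #S₂ ≤ d ∧ ∀ i ∉ T, w i ∈ S₂ := by
  rcases le_or_gt #S d with hS' | hS'
  · obtain ⟨T, -, hT⟩ := exists_subset_card_eq
      (show s ≤ #(univ : Finset κ) by rw [card_univ, hκ]; omega)
    exact ⟨T, hT, ⟨S, hS', fun i _ => hS i⟩, S, hS', fun i _ => hS i⟩
  obtain ⟨x, hx, y, hy, hxy, hxs, hys⟩ := exists_two_fibers_card_le w hS (by omega) hκ
  obtain ⟨T, hT, hTy, hTx⟩ := exists_card_eq_of_fibers_card_le w hxy hκ hxs hys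
  refine ⟨T, hT, ⟨S.erase y, ?_, fun i hi => mem_erase.mpr ⟨hTy i hi, hS i⟩⟩,
    S.erase x, ?_, fun i hi => mem_erase.mpr ⟨hTx i hi, hS i⟩⟩
  · rw [card_erase_of_mem hy]; omega
  · rw [card_erase_of_mem hx]; omega

end Split

theorem PairingConj.isPairSums {m : ℕ} (hm : PairingConj m) {V ι : Type*} [AddCommGroup V]
    [Module (ZMod 2) V] [FiniteDimensional (ZMod 2) V] [Fintype ι]
    (hV : finrank (ZMod 2) V = m) (hι : Fintype.card ι = 2 ^ (m - 1)) {u : ι → V}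
    (hu : ∀ i, u i ≠ 0) (hsum : ∑ i, u i = 0) : IsPairSums u := by
  let φ : V ≃ₗ[ZMod 2] (Fin m → ZMod 2) :=
    LinearEquiv.ofFinrankEq _ _ (by rw [hV, finrank_fin_fun])
  let σ : Fin (2 ^ (m - 1)) ≃ ι := (Fintype.equivFinOfCardEq hι).symm
  obtain ⟨p, q, hpq, hv⟩ := hm (φ ∘ u ∘ σ) (fun i => by simpa using hu (σ i))
    (by simp only [Function.comp_apply, ← map_sum, Equiv.sum_comp σ u, hsum, map_zero])
  have := (IsPairSums.map_addEquiv ⟨p, q, hpq, hv⟩ φ.symm.toAddEquiv).comp_equiv σ.symm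
  convert this using 1
  funext i
  simp

theorem isPairSums_double_of_pairingConj {d : ℕ} (hconj : PairingConj (d + 2)) {V κ : Type*}
    [AddCommGroup V] [Module (ZMod 2) V] [FiniteDimensional (ZMod 2) V] [Fintype κ]
    (hV : finrank (ZMod 2) V = d + 2) (hκ : Fintype.card κ = 2 ^ d) {w : κ → V}
    (hw : ∀ i, w i ≠ 0) : IsPairSums fun x : κ × Fin 2 => w x.1 :=
  hconj.isPairSums hV (by simp [hκ, pow_succ]) (fun x => hw x.1) <| by
    simp only [Fintype.sum_prod_type, Fin.sum_univ_two, add_self_eq_zero_of_module_zmod_two,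
      sum_const_zero]

theorem isPairSums_double_of_compl {V κ : Type*} [AddCommGroup V] [Module (ZMod 2) V]
    [DecidableEq κ] {f : Module.Dual (ZMod 2) V} {e : V} (he : f e ≠ 0)
    (w : κ → LinearMap.ker f) (T : Finset κ)
    (h₁ : IsPairSums fun x : {i // i ∈ T} × Fin 2 => w x.1)
    (h₂ : IsPairSums fun x : {i // i ∉ T} × Fin 2 => w x.1) :
    IsPairSums fun x : κ × Fin 2 => (w x.1 : V) := by
  have := (IsPairSums.sumElim (add_self_eq_zero_of_module_zmod_two e)
    (f.bijective_sumElim_ker he) h₁ h₂).comp_equiv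
      ((Equiv.prodCongr (Equiv.sumCompl (· ∈ T)).symm (Equiv.refl _)).trans
        (Equiv.sumProdDistrib _ _ _))
  convert this using 1
  funext ⟨i, b⟩
  by_cases hi : i ∈ T <;> simp [hi]

theorem isPairSums_double (hconj : ∀ k, 2 ≤ k → k ≤ 5 → PairingConj k) {d : ℕ} {V κ : Type*}
    [AddCommGroup V] [Module (ZMod 2) V] [FiniteDimensional (ZMod 2) V] [Fintype κ]
    (hV : finrank (ZMod 2) V = d + 2) (hκ : Fintype.card κ = 2 ^ d) {w : κ → V}
    (hw : ∀ i, w i ≠ 0) {S : Finset V} (hS : ∀ i, w i ∈ S) (hSd : #S ≤ d + 1) :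
    IsPairSums fun x : κ × Fin 2 => w x.1 := by
  classical
  induction d generalizing V κ S with
  | zero => exact isPairSums_double_of_pairingConj (hconj 2 le_rfl (by norm_num)) hV hκ hw
  | succ d ih =>
    rcases le_or_gt d 2 with hd | hd
    · exact isPairSums_double_of_pairingConj (hconj _ (by omega) (by omega)) hV hκ hw
    obtain ⟨T, hT, ⟨S₁, hS₁, hwS₁⟩, S₂, hS₂, hwS₂⟩ :=
      exists_split_fewer_values w hS (by omega) hSd (by rw [hκ, pow_succ, mul_comm])
    obtain ⟨f, hf, hfS⟩ :=
      S.exists_dual_ne_zero_of_card_lt_finrank (K := ZMod 2) (by rw [hV]; omega)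
    obtain ⟨e, he⟩ : ∃ e, f e ≠ 0 := not_forall.mp fun h => hf (LinearMap.ext h)
    have hW : finrank (ZMod 2) (LinearMap.ker f) = d + 2 := by
      have := f.finrank_ker_add_one_of_ne_zero hf
      omega
    let lift (i : κ) : LinearMap.ker f := ⟨w i, hfS _ (hS i)⟩
    have half (P : κ → Prop) [Fintype {i // P i}] (hP : Fintype.card {i // P i} = 2 ^ d)
        {S' : Finset V} (hS' : #S' ≤ d + 1) (hwS' : ∀ i, P i → w i ∈ S') :
        IsPairSums fun x : {i // P i} × Fin 2 => lift x.1 :=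
      ih hW hP (w := fun i => lift i) (fun i h => hw i (congrArg Subtype.val h))
        (S := S'.subtype (· ∈ LinearMap.ker f)) (fun i => by simpa using hwS' i i.2)
        ((card_subtype _ _).le.trans ((card_filter_le _ _).trans hS'))
    refine isPairSums_double_of_compl he lift T (half _ (by simp [hT]) hS₁ hwS₁)
      (half _ ?_ hS₂ hwS₂)
    rw [Fintype.card_subtype_compl, Fintype.card_coe, hκ, hT, pow_succ]
    omega

/-- Assuming the pairing conjecture holds in `F_2^2` through `F_2^5`, any `2^{n-1}` nonzero
vectors in `F_2^n` with `v_{2i-1} = v_{2i}` for all `i` and with at most `l < n` distinct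
values are realized as the pair-sums of a partition of `F_2^n` into pairs. -/
theorem pairing_of_few_values (n l : ℕ) (hl : l < n)
    (hconj : ∀ k, 2 ≤ k → k ≤ 5 → PairingConj k)
    (v : Fin (2 ^ (n - 1)) → (Fin n → ZMod 2))
    (hnz : ∀ i, v i ≠ 0)
    (hpair : ∀ (j : ℕ) (h : 2 * j + 1 < 2 ^ (n - 1)),
      v ⟨2 * j, lt_trans (Nat.lt_succ_self _) h⟩ = v ⟨2 * j + 1, h⟩)
    (hvals : (Finset.univ.image v).card ≤ l) :
    ∃ p q : Fin (2 ^ (n - 1)) → (Fin n → ZMod 2),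
      PairPartition n p q ∧ ∀ i, p i + q i = v i := by
  obtain ⟨d, rfl⟩ : ∃ d, n = d + 2 := by
    have : 0 < #(univ.image v) :=
      card_pos.mpr (univ_nonempty_iff.mpr ⟨⟨0, by positivity⟩⟩ |>.image v)
    exact ⟨n - 2, by omega⟩
  let σ : Fin (2 ^ d) × Fin 2 ≃ Fin (2 ^ (d + 2 - 1)) :=
    finProdFinEquiv.trans (finCongr (pow_succ 2 d).symm)
  have hσ : v ∘ σ = fun x => v (σ (x.1, 0)) := by
    funext ⟨j, b⟩
    fin_cases b
    · rfl
    · have hj : 2 * (j : ℕ) + 1 < 2 ^ (d + 1) := by have := j.2; rw [pow_succ]; omega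
      have h₀ : σ (j, 0) = ⟨2 * j, lt_trans (Nat.lt_succ_self _) hj⟩ := Fin.ext (by simp [σ])
      have h₁ : σ (j, 1) = ⟨2 * j + 1, hj⟩ := Fin.ext (by simp [σ]; omega)
      show v (σ (j, 1)) = v (σ (j, 0))
      rw [h₀, h₁]
      exact (hpair j hj).symm
  have hdouble := isPairSums_double hconj (finrank_fin_fun (ZMod 2)) (by simp)
    (fun j => hnz (σ (j, 0))) (fun j => mem_image_of_mem v (mem_univ _)) (by omega)
  have hv : (fun x : Fin (2 ^ d) × Fin 2 => v (σ (x.1, 0))) ∘ σ.symm = v := by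
    rw [← hσ, Function.comp_assoc, Equiv.self_comp_symm, Function.comp_id]
  exact hv ▸ hdouble.comp_equiv σ.symm
end

section
/- For any 2^{n-1} nonzero vectors v_1, ..., v_{2^{n-1}} in F_2^n with v_{2i-1} = v_{2i} for all 1 ≤ i ≤ 2^{n-2} and with dim(span{v_1, ..., v_{2^{n-1}}}) ≤ n/2, there exists a partition of F_2^n into pairs (p_i, q_i) such that p_i + q_i = v_i for all i. -/
open Finset

/-- Generic realizability: `M` is the multiset of pair-sums of a pair partition of `G`. -/
def GR (G : Type*) [Add G] (N : ℕ) (M : Multiset G) : Prop :=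
  ∃ p q : Fin N → G,
    Function.Bijective (fun x : Fin N × Bool => if x.2 then p x.1 else q x.1) ∧
    Finset.univ.val.map (fun i => p i + q i) = M

lemma exists_perm_of_map_eq {β : Type*} [DecidableEq β] {N : ℕ} {f g : Fin N → β}
    (h : Finset.univ.val.map f = Finset.univ.val.map g) :
    ∃ σ : Equiv.Perm (Fin N), ∀ i, f (σ i) = g i := by
  have hfib : ∀ b : β, Nonempty ({ a // g a = b } ≃ { a // f a = b }) := by
    intro b
    apply Fintype.card_eq.mp
    have h1 : ∀ (f : Fin N → β), Fintype.card { a // f a = b }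
        = Multiset.count b (Finset.univ.val.map f) := by
      intro f
      rw [Fintype.card_subtype, Multiset.count_map, Finset.card, Finset.filter_val]
      congr 1
      exact Multiset.filter_congr (fun x _ => by constructor <;> (intro h; exact h.symm))
    rw [h1, h1, h]
  refine ⟨Equiv.ofFiberEquiv (fun b => (hfib b).some), fun i => ?_⟩
  exact Equiv.ofFiberEquiv_map (fun b => (hfib b).some) i

lemma GR.mapEquiv {G G' : Type*} [Add G] [Add G'] (e : G ≃+ G') {N : ℕ} {M : Multiset G}
    (h : GR G N M) : GR G' N (M.map e) := by
  obtain ⟨p, q, hbij, hmul⟩ := h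
  refine ⟨e ∘ p, e ∘ q, ?_, ?_⟩
  · have heq : (fun x : Fin N × Bool => if x.2 then (e ∘ p) x.1 else (e ∘ q) x.1)
        = e ∘ (fun x : Fin N × Bool => if x.2 then p x.1 else q x.1) := by
      funext x; by_cases hx : x.2 <;> simp [hx]
    rw [heq]
    exact e.bijective.comp hbij
  · rw [← hmul, Multiset.map_map]
    congr 1; funext i; simp

lemma GR.congrN {G : Type*} [Add G] {N N' : ℕ} (h : N = N') {M : Multiset G}
    (hg : GR G N M) : GR G N' M := h ▸ hg

lemma GR_singleton {x : Fin 1 → ZMod 2} (hx : x ≠ 0) : GR (Fin 1 → ZMod 2) 1 {x} := by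
  refine ⟨fun _ => 0, fun _ => x, ⟨?_, ?_⟩, by simp⟩
  · rintro ⟨i, b⟩ ⟨j, b'⟩ h
    have hij : i = j := Subsingleton.elim i j
    subst hij
    cases b <;> cases b' <;> simp only [if_true, if_false, Bool.false_eq_true] at h ⊢
    · exact absurd h hx
    · exact absurd h.symm hx
  · intro y
    by_cases hy : y 0 = 0
    · refine ⟨(0, true), ?_⟩
      simp only [if_true]
      funext i
      have h0 : i = 0 := Subsingleton.elim i 0
      subst h0
      simpa using hy.symm
    · refine ⟨(0, false), ?_⟩
      simp only [if_false, Bool.false_eq_true]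
      funext i
      have h0 : i = 0 := Subsingleton.elim i 0
      subst h0
      have h1 : y 0 = 1 := by
        revert hy; generalize y 0 = a; revert a; decide
      have h2 : x 0 = 1 := by
        by_contra hx0
        apply hx
        funext j
        have hj : j = 0 := Subsingleton.elim j 0
        subst hj
        revert hx0; generalize x 0 = a; revert a; decide
      rw [h1, h2]

lemma GR_of_conj3 {d : ℕ}
    (hconj3 : ∀ (w : Fin (2 ^ (d - 1)) → (Fin d → ZMod 2)),
      (∀ i, w i ≠ 0) → ∑ i, w i = 0 → (Finset.univ.image w).card ≤ 3 →
        ∃ p q : Fin (2 ^ (d - 1)) → (Fin d → ZMod 2),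
          PairPartition d p q ∧ ∀ i, p i + q i = w i)
    (M : Multiset (Fin d → ZMod 2)) (hcard : Multiset.card M = 2 ^ (d - 1))
    (h0 : (0 : Fin d → ZMod 2) ∉ M) (hsum : M.sum = 0) (h3 : M.toFinset.card ≤ 3) :
    GR (Fin d → ZMod 2) (2 ^ (d - 1)) M := by
  have hlen : M.toList.length = 2 ^ (d - 1) := by simp [hcard]
  set w : Fin (2 ^ (d - 1)) → (Fin d → ZMod 2) :=
    fun i => M.toList.get (Fin.cast hlen.symm i) with hw
  have hofn : List.ofFn w = M.toList := by
    apply List.ext_get (by simp [hlen])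
    intro i h1 h2
    simp [hw]
  have hmap : Finset.univ.val.map w = M := by
    rw [Fin.univ_val_map, hofn, Multiset.coe_toList]
  have hnz : ∀ i, w i ≠ 0 := by
    intro i hcontra
    apply h0
    have : w i ∈ M.toList := List.get_mem _ _
    rw [hcontra] at this
    exact (Multiset.mem_toList).mp this
  have hsum' : ∑ i, w i = 0 := by
    have : ∑ i, w i = (Finset.univ.val.map w).sum := rfl
    rw [this, hmap, hsum]
  have himg : (Finset.univ.image w).card ≤ 3 := by
    have himg2 : Finset.univ.image w = M.toFinset := by
      ext a
      simp only [Finset.mem_image, Multiset.mem_toFinset, ← hmap, Multiset.mem_map]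
      constructor
      · rintro ⟨i, _, rfl⟩; exact ⟨i, by simp, rfl⟩
      · rintro ⟨i, _, rfl⟩; exact ⟨i, Finset.mem_univ i, rfl⟩
    rw [himg2]; exact h3
  obtain ⟨p, q, hpp, hpq⟩ := hconj3 w hnz hsum' himg
  refine ⟨p, q, hpp, ?_⟩
  rw [← hmap]
  congr 1
  funext i
  exact hpq i

lemma univ_prod_map {A B γ : Type*} [Fintype A] [Fintype B] (F : A × B → γ) :
    (Finset.univ.val : Multiset (A × B)).map F
      = ∑ a : A, (Finset.univ.val : Multiset B).map (fun b => F (a, b)) := by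
  rw [← Finset.univ_product_univ, Finset.product_val]
  show (((Finset.univ.val : Multiset A).bind
      (fun a => (Finset.univ.val : Multiset B).map (Prod.mk a))).map F) = _
  rw [Multiset.map_bind]
  show ((Finset.univ.val : Multiset A).map _).join = _
  rw [Multiset.join, Finset.sum]
  congr 1
  apply Multiset.map_congr rfl
  intro a _
  rw [Multiset.map_map]
  rfl

lemma GR_prod {G H : Type*} [AddCommGroup G] [AddCommGroup H] [Fintype H]
    (hH : ∀ x : H, x + x = 0) (g N : ℕ) (e : Fin g ≃ H) (B : Fin g → Multiset G)
    (hB : ∀ c, GR G N (B c)) :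
    GR (G × H) (g * N) ((∑ c, B c).map (fun x => (x, (0 : H)))) := by
  choose p q hbij hmul using hB
  set dec : Fin (g * N) ≃ Fin g × Fin N := finProdFinEquiv.symm with hdec
  refine ⟨fun k => (p (dec k).1 (dec k).2, e (dec k).1),
          fun k => (q (dec k).1 (dec k).2, e (dec k).1), ⟨?_, ?_⟩, ?_⟩
  · rintro ⟨k, b⟩ ⟨k', b'⟩ hkk
    have h1 := congrArg Prod.fst hkk
    have h2 := congrArg Prod.snd hkk
    simp only [apply_ite Prod.fst, apply_ite Prod.snd, ite_self] at h1 h2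
    have hc : (dec k).1 = (dec k').1 := e.injective h2
    rw [← hc] at h1
    have h3 : ((dec k).2, b) = ((dec k').2, b') := by
      apply (hbij (dec k).1).1
      exact h1
    have h4 : dec k = dec k' := by
      apply Prod.ext hc
      exact congrArg Prod.fst h3
    have h5 : k = k' := dec.injective h4
    have hb : b = b' := congrArg Prod.snd h3
    rw [h5, hb]
  · rintro ⟨x, h⟩
    obtain ⟨⟨j, b⟩, hj⟩ := (hbij (e.symm h)).2 x
    refine ⟨(dec.symm (e.symm h, j), b), ?_⟩
    have hd : dec (dec.symm (e.symm h, j)) = (e.symm h, j) := dec.apply_symm_apply _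
    cases b
    · show (q _ _, e _) = (x, h)
      rw [hd]
      exact Prod.ext (by simpa using hj) (e.apply_symm_apply h)
    · show (p _ _, e _) = (x, h)
      rw [hd]
      exact Prod.ext (by simpa using hj) (e.apply_symm_apply h)
  · have huniv : (Finset.univ.val : Multiset (Fin (g * N)))
        = Multiset.map (⇑finProdFinEquiv) Finset.univ.val := by
      conv_lhs => rw [← Finset.map_univ_equiv (finProdFinEquiv : Fin g × Fin N ≃ Fin (g * N))]
      simp [Finset.map_val]
    rw [huniv, Multiset.map_map]
    have hfun : ∀ cj : Fin g × Fin N,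
        ((fun k => ((p (dec k).1 (dec k).2 : G), e (dec k).1)
          + (q (dec k).1 (dec k).2, e (dec k).1)) ∘ ⇑finProdFinEquiv) cj
        = ((fun x : G => (x, (0 : H))) ∘ (fun cj : Fin g × Fin N => p cj.1 cj.2 + q cj.1 cj.2)) cj := by
      intro cj
      have hd : dec (finProdFinEquiv cj) = cj := finProdFinEquiv.symm_apply_apply cj
      simp only [Function.comp_apply, hd, Prod.mk_add_mk, hH]
    rw [Multiset.map_congr rfl (fun cj _ => hfun cj), ← Multiset.map_map]
    rw [univ_prod_map (fun cj : Fin g × Fin N => p cj.1 cj.2 + q cj.1 cj.2)]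
    have hterm : ∀ c : Fin g, (Finset.univ.val : Multiset (Fin N)).map
        (fun j => p c j + q c j) = B c := fun c => hmul c
    rw [Finset.sum_congr rfl (fun c _ => hterm c)]

lemma exists_block {β : Type*} [DecidableEq β] (t g : ℕ) (ht : 1 ≤ t) (U : Multiset β)
    (hcard : Multiset.card U = t * (g + 1)) (hV : U.toFinset.card ≤ g + 1) :
    ∃ B : Multiset β, B ≤ U ∧ Multiset.card B = t ∧ B.toFinset.card ≤ 2 ∧
      (U - B).toFinset.card ≤ g := by
  have hsum := Multiset.toFinset_sum_count_eq U
  by_cases hVg : U.toFinset.card ≤ g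
  · -- plenty of groups left; just find a value with multiplicity ≥ t
    have ⟨a, _, hta⟩ : ∃ a ∈ U.toFinset, t ≤ U.count a := by
      by_contra hcon
      push_neg at hcon
      have hle : ∑ a ∈ U.toFinset, U.count a ≤ U.toFinset.card * (t - 1) := by
        apply Finset.sum_le_card_nsmul
        intro x hx
        have := hcon x hx
        omega
      rw [hsum, hcard] at hle
      have h2 : U.toFinset.card * (t - 1) ≤ g * (t - 1) := Nat.mul_le_mul_right _ hVg
      obtain ⟨t', rfl⟩ : ∃ t', t = t' + 1 := ⟨t - 1, by omega⟩
      simp only [Nat.add_sub_cancel] at h2 hle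
      nlinarith
    refine ⟨Multiset.replicate t a, Multiset.le_count_iff_replicate_le.mp hta,
      Multiset.card_replicate _ _, ?_, ?_⟩
    · have hsub : (Multiset.replicate t a).toFinset ⊆ {a} := by
        intro x hx
        rw [Multiset.mem_toFinset, Multiset.eq_of_mem_replicate hx] at *
        exact Finset.mem_singleton_self a
      calc (Multiset.replicate t a).toFinset.card ≤ ({a} : Finset β).card :=
            Finset.card_le_card hsub
        _ ≤ 2 := by simp
    · refine le_trans (Finset.card_le_card ?_) hVg
      intro x hx
      rw [Multiset.mem_toFinset] at hx ⊢
      exact Multiset.mem_of_le (Multiset.sub_le_self _ _) hx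
  · have hVeq : U.toFinset.card = g + 1 := by omega
    -- find a value with small multiplicity
    have ⟨a, haU, hat⟩ : ∃ a ∈ U.toFinset, U.count a ≤ t := by
      by_contra hcon
      push_neg at hcon
      have hge := Finset.card_nsmul_le_sum U.toFinset (fun x => U.count x) (t + 1)
        (fun x hx => hcon x hx)
      rw [hsum, hcard, hVeq, smul_eq_mul] at hge
      nlinarith
    set m := U.count a with hm
    have hm1 : 1 ≤ m := by
      rw [hm]
      exact Multiset.count_pos.mpr (Multiset.mem_toFinset.mp haU)
    have herase : ∀ B : Multiset β, Multiset.count a (U - B) = 0 →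
        (U - B).toFinset.card ≤ g := by
      intro B hB
      have hsub : (U - B).toFinset ⊆ U.toFinset.erase a := by
        intro x hx
        rw [Multiset.mem_toFinset] at hx
        refine Finset.mem_erase.mpr ⟨?_, Multiset.mem_toFinset.mpr
          (Multiset.mem_of_le (Multiset.sub_le_self _ _) hx)⟩
        rintro rfl
        rw [← Multiset.count_pos, hB] at hx
        omega
      calc (U - B).toFinset.card ≤ (U.toFinset.erase a).card := Finset.card_le_card hsub
        _ = g := by rw [Finset.card_erase_of_mem haU, hVeq]; omega
    by_cases hmt : m = t
    · refine ⟨Multiset.replicate t a, Multiset.le_count_iff_replicate_le.mp (by omega),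
        Multiset.card_replicate _ _, ?_, ?_⟩
      · have hsub : (Multiset.replicate t a).toFinset ⊆ {a} := by
          intro x hx
          rw [Multiset.mem_toFinset, Multiset.eq_of_mem_replicate hx] at *
          exact Finset.mem_singleton_self a
        calc (Multiset.replicate t a).toFinset.card ≤ ({a} : Finset β).card :=
              Finset.card_le_card hsub
          _ ≤ 2 := by simp
      · apply herase
        rw [Multiset.count_sub, Multiset.count_replicate, if_pos rfl]
        omega
    · have hmlt : m < t := by omega
      -- find a second value b with enough multiplicity
      have ⟨b, hbU, hba, hbt⟩ : ∃ b ∈ U.toFinset, b ≠ a ∧ t - m ≤ U.count b := by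
        by_contra hcon
        push_neg at hcon
        have hle : ∑ x ∈ U.toFinset.erase a, U.count x ≤
            (U.toFinset.erase a).card * (t - m - 1) := by
          apply Finset.sum_le_card_nsmul
          intro x hx
          have hx' := Finset.mem_erase.mp hx
          have := hcon x hx'.2 hx'.1
          omega
        rw [Finset.card_erase_of_mem haU, hVeq] at hle
        have htot : m + ∑ x ∈ U.toFinset.erase a, Multiset.count x U = t * (g + 1) := by
          rw [hm, Finset.add_sum_erase U.toFinset (fun x => Multiset.count x U) haU,
            hsum, hcard]
        obtain ⟨u, hu⟩ : ∃ u, t = m + 1 + u := ⟨t - m - 1, by omega⟩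
        have e1 : g + 1 - 1 = g := by omega
        have e2 : t - m - 1 = u := by omega
        rw [e1, e2] at hle
        subst hu
        nlinarith
      refine ⟨Multiset.replicate m a + Multiset.replicate (t - m) b, ?_, ?_, ?_, ?_⟩
      · rw [Multiset.le_iff_count]
        intro x
        rw [Multiset.count_add, Multiset.count_replicate, Multiset.count_replicate]
        by_cases hxa : a = x
        · rw [if_pos hxa, if_neg (fun h : b = x => hba (h.trans hxa.symm))]
          rw [← hxa, ← hm]
          omega
        · rw [if_neg hxa]
          by_cases hxb : b = x
          · rw [if_pos hxb, ← hxb]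
            omega
          · rw [if_neg hxb]; omega
      · rw [Multiset.card_add, Multiset.card_replicate, Multiset.card_replicate]
        omega
      · have hsub : (Multiset.replicate m a + Multiset.replicate (t - m) b).toFinset
            ⊆ {a, b} := by
          intro x hx
          rw [Multiset.mem_toFinset, Multiset.mem_add] at hx
          rcases hx with hx | hx
          · rw [Multiset.eq_of_mem_replicate hx]
            exact Finset.mem_insert_self a {b}
          · rw [Multiset.eq_of_mem_replicate hx]
            exact Finset.mem_insert_of_mem (Finset.mem_singleton_self b)
        calc _ ≤ ({a, b} : Finset β).card := Finset.card_le_card hsub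
          _ ≤ 2 := Finset.card_insert_le a {b} |>.trans (by simp)
      · apply herase
        rw [Multiset.count_sub, Multiset.count_add, Multiset.count_replicate,
          Multiset.count_replicate, if_pos rfl, if_neg hba, ← hm]
        omega

lemma exists_distribution {β : Type*} [DecidableEq β] (t : ℕ) (ht : 1 ≤ t) :
    ∀ (g : ℕ) (U : Multiset β), Multiset.card U = t * g → U.toFinset.card ≤ g →
    ∃ B : Fin g → Multiset β, (∑ c, B c) = U ∧
      ∀ c, Multiset.card (B c) = t ∧ (B c).toFinset.card ≤ 2 := by
  intro g
  induction g with
  | zero =>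
    intro U hc hV
    have hU : U = 0 := Multiset.card_eq_zero.mp (by simpa using hc)
    exact ⟨fun c => c.elim0, by simp [hU], fun c => c.elim0⟩
  | succ g ih =>
    intro U hc hV
    obtain ⟨B0, hB0le, hB0card, hB0f, hrest⟩ := exists_block t g ht U hc hV
    have hsubcard : Multiset.card (U - B0) = t * g := by
      rw [Multiset.card_sub hB0le, hc, hB0card, Nat.mul_succ, Nat.add_sub_cancel]
    obtain ⟨B, hBsum, hBprop⟩ := ih (U - B0) hsubcard hrest
    refine ⟨Fin.cons B0 B, ?_, ?_⟩
    · rw [Fin.sum_cons, hBsum]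
      exact add_tsub_cancel_of_le hB0le
    · intro c
      refine Fin.cases ?_ ?_ c
      · simpa using ⟨hB0card, hB0f⟩
      · intro i
        simpa using hBprop i

lemma map_double {γ : Type*} (m : ℕ) (f : Fin (2 * m) → γ)
    (hf : ∀ j : Fin m, f ⟨2 * j.1, by omega⟩ = f ⟨2 * j.1 + 1, by omega⟩) :
    (Finset.univ.val : Multiset (Fin (2 * m))).map f
      = (Finset.univ.val.map fun j : Fin m => f ⟨2 * j.1, by omega⟩)
        + (Finset.univ.val.map fun j : Fin m => f ⟨2 * j.1, by omega⟩) := by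
  set e' : Fin m × Fin 2 ≃ Fin (2 * m) :=
    finProdFinEquiv.trans (finCongr (by ring)) with he'
  have hv0 : ∀ j : Fin m, e' (j, 0) = ⟨2 * j.1, by omega⟩ := by
    intro j
    apply Fin.ext
    simp [he', finProdFinEquiv]
  have hv1 : ∀ j : Fin m, e' (j, 1) = ⟨2 * j.1 + 1, by omega⟩ := by
    intro j
    apply Fin.ext
    simp [he', finProdFinEquiv]
    omega
  have h1 : (Finset.univ.val : Multiset (Fin (2 * m))).map f
      = (Finset.univ.val : Multiset (Fin m × Fin 2)).map (fun x => f (e' x)) := by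
    conv_lhs => rw [← Finset.map_univ_equiv e']
    rw [Finset.map_val, Multiset.map_map]
    rfl
  rw [h1, univ_prod_map (fun x : Fin m × Fin 2 => f (e' x))]
  have h2 : ∀ j : Fin m, (Finset.univ.val : Multiset (Fin 2)).map
      (fun b => f (e' (j, b))) = {f ⟨2 * j.1, by omega⟩} + {f ⟨2 * j.1 + 1, by omega⟩} := by
    intro j
    have : (Finset.univ.val : Multiset (Fin 2)) = {0, 1} := rfl
    rw [this]
    simp [hv0 j, hv1 j]
  rw [Finset.sum_congr rfl (fun j _ => h2 j), Finset.sum_add_distrib]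
  congr 1
  · rw [← Multiset.sum_map_singleton (Multiset.map (fun j : Fin m => f ⟨2 * j.1, by omega⟩)
      Finset.univ.val), Multiset.map_map]
    rfl
  · have : ∀ j : Fin m, f ⟨2 * j.1 + 1, by omega⟩ = f ⟨2 * j.1, by omega⟩ :=
      fun j => (hf j).symm
    rw [Finset.sum_congr rfl (fun j _ => by rw [this j])]
    rw [← Multiset.sum_map_singleton (Multiset.map (fun j : Fin m => f ⟨2 * j.1, by omega⟩)
      Finset.univ.val), Multiset.map_map]
    rfl

lemma GR_singleton' {d : ℕ} (hd : d = 1) {x : Fin d → ZMod 2} (hx : x ≠ 0) :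
    GR (Fin d → ZMod 2) (2 ^ (d - 1)) {x} := by
  subst hd
  exact GR_singleton hx

lemma sum_singleton_map {γ : Type*} {k : ℕ} (h : Fin k → γ) :
    ∑ c, ({h c} : Multiset γ) = Finset.univ.val.map h := by
  rw [← Multiset.sum_map_singleton (Multiset.map h Finset.univ.val), Multiset.map_map]
  rfl

/-- Assuming the pairing conjecture holds for families with at most 3 distinct values,
any `2^{n-1}` nonzero vectors in `F_2^n` with `v_{2i-1} = v_{2i}` for all `i` and with
`dim(span{v_i}) ≤ n/2` are realized as the pair-sums of a partition of `F_2^n` into pairs. -/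
theorem pairing_of_span_dim_le_half (n : ℕ)
    (hconj3 : ∀ (k : ℕ) (w : Fin (2 ^ (k - 1)) → (Fin k → ZMod 2)),
      (∀ i, w i ≠ 0) → ∑ i, w i = 0 → (Finset.univ.image w).card ≤ 3 →
        ∃ p q : Fin (2 ^ (k - 1)) → (Fin k → ZMod 2),
          PairPartition k p q ∧ ∀ i, p i + q i = w i)
    (v : Fin (2 ^ (n - 1)) → (Fin n → ZMod 2))
    (hnz : ∀ i, v i ≠ 0)
    (hpair : ∀ (j : ℕ) (h : 2 * j + 1 < 2 ^ (n - 1)),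
      v ⟨2 * j, lt_trans (Nat.lt_succ_self _) h⟩ = v ⟨2 * j + 1, h⟩)
    (hdim : 2 * Module.finrank (ZMod 2) (Submodule.span (ZMod 2) (Set.range v)) ≤ n) :
    ∃ p q : Fin (2 ^ (n - 1)) → (Fin n → ZMod 2),
      PairPartition n p q ∧ ∀ i, p i + q i = v i := by
  classical
  set W := Submodule.span (ZMod 2) (Set.range v) with hW
  set d := Module.finrank (ZMod 2) W with hd
  have hvW : ∀ i, v i ∈ W := fun i => Submodule.subset_span (Set.mem_range_self i)
  have i0 : Fin (2 ^ (n - 1)) := ⟨0, by positivity⟩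
  have hd1 : 1 ≤ d := by
    by_contra h
    have hd0 : d = 0 := by omega
    have hWbot : W = ⊥ := by
      apply Submodule.finrank_eq_zero.mp
      rw [← hd]
      exact hd0
    exact hnz i0 (Submodule.mem_bot (ZMod 2) |>.mp (hWbot ▸ hvW i0))
  have h2d : 2 * d ≤ n := hdim
  have hdn : d ≤ n := by omega
  have hn2 : 2 ≤ n := by omega
  -- complement and linear equivalence
  obtain ⟨C, hC⟩ := Submodule.exists_isCompl W
  have hrkC : Module.finrank (ZMod 2) C = n - d := by
    have := Submodule.finrank_add_eq_of_isCompl hC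
    rw [Module.finrank_fin_fun] at this
    omega
  obtain ⟨eW⟩ : Nonempty (W ≃ₗ[ZMod 2] (Fin d → ZMod 2)) :=
    FiniteDimensional.nonempty_linearEquiv_of_finrank_eq
      (by rw [Module.finrank_fin_fun, ← hd])
  obtain ⟨eC⟩ : Nonempty (C ≃ₗ[ZMod 2] (Fin (n - d) → ZMod 2)) :=
    FiniteDimensional.nonempty_linearEquiv_of_finrank_eq
      (by rw [Module.finrank_fin_fun, hrkC])
  set T : (Fin n → ZMod 2) ≃ₗ[ZMod 2] (Fin d → ZMod 2) × (Fin (n - d) → ZMod 2) :=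
    (Submodule.prodEquivOfIsCompl W C hC).symm.trans (eW.prodCongr eC) with hT
  have hTW : ∀ (x : Fin n → ZMod 2), x ∈ W → (T x).2 = 0 := by
    intro x hx
    have h1 : (Submodule.prodEquivOfIsCompl W C hC).symm x = ((⟨x, hx⟩ : W), (0 : C)) :=
      Submodule.prodEquivOfIsCompl_symm_apply_left W C hC (⟨x, hx⟩ : W)
    show ((eW.prodCongr eC) ((Submodule.prodEquivOfIsCompl W C hC).symm x)).2 = 0
    rw [h1]
    simp
  set w : Fin (2 ^ (n - 1)) → (Fin d → ZMod 2) := fun i => (T (v i)).1 with hwdef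
  have hTv : ∀ i, T (v i) = (w i, 0) := fun i => Prod.ext rfl (hTW (v i) (hvW i))
  have hw0 : ∀ i, w i ≠ 0 := by
    intro i hcontra
    apply hnz i
    have h00 : T (v i) = 0 := by rw [hTv i, hcontra]; rfl
    have h0 : T (v i) = T 0 := by rw [h00, map_zero]
    exact T.injective h0
  -- halving the index set
  have hm2 : 2 * 2 ^ (n - 2) = 2 ^ (n - 1) := by
    rw [← pow_succ']
    congr 1
    omega
  set f : Fin (2 * 2 ^ (n - 2)) → (Fin d → ZMod 2) := fun k => w (finCongr hm2 k) with hfd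
  have hwpair : ∀ (j : ℕ) (h : 2 * j + 1 < 2 ^ (n - 1)),
      w ⟨2 * j, lt_trans (Nat.lt_succ_self _) h⟩ = w ⟨2 * j + 1, h⟩ := by
    intro j h
    show (T (v _)).1 = (T (v _)).1
    rw [hpair j h]
  have hfpair : ∀ j : Fin (2 ^ (n - 2)),
      f ⟨2 * j.1, by omega⟩ = f ⟨2 * j.1 + 1, by omega⟩ := by
    intro j
    have hb : 2 * j.1 + 1 < 2 ^ (n - 1) := by have := j.2; omega
    have hkey := hwpair j.1 hb
    show w (finCongr hm2 _) = w (finCongr hm2 _)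
    convert hkey using 2 <;> exact Fin.ext rfl
  have hwf : (Finset.univ.val : Multiset (Fin (2 ^ (n - 1)))).map w
      = (Finset.univ.val : Multiset (Fin (2 * 2 ^ (n - 2)))).map f := by
    conv_lhs => rw [← Finset.map_univ_equiv (finCongr hm2)]
    rw [Finset.map_val, Multiset.map_map]
    rfl
  set u : Fin (2 ^ (n - 2)) → (Fin d → ZMod 2) := fun j => f ⟨2 * j.1, by omega⟩ with hud
  have hUU : (Finset.univ.val : Multiset (Fin (2 ^ (n - 1)))).map w
      = Finset.univ.val.map u + Finset.univ.val.map u :=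
    hwf.trans (map_double _ f hfpair)
  have hu0 : ∀ j, u j ≠ 0 := fun j => hw0 _
  have h0U : (0 : Fin d → ZMod 2) ∉ Finset.univ.val.map u := by
    intro hmem
    obtain ⟨j, _, hj⟩ := Multiset.mem_map.mp hmem
    exact hu0 j hj
  -- construct the blocks
  have hblocks : ∃ B : Fin (2 ^ (n - d)) → Multiset (Fin d → ZMod 2),
      (∀ c, GR (Fin d → ZMod 2) (2 ^ (d - 1)) (B c)) ∧
      (∑ c, B c) = Finset.univ.val.map u + Finset.univ.val.map u := by
    by_cases hdeq : d = 1
    · set M1 := Finset.univ.val.map u + Finset.univ.val.map u with hM1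
      have hM1card : Multiset.card M1 = 2 ^ (n - d) := by
        rw [hM1, Multiset.card_add, Multiset.card_map]
        have hcv : Multiset.card (Finset.univ.val : Multiset (Fin (2 ^ (n - 2))))
            = 2 ^ (n - 2) := by
          rw [← Finset.card_def, Finset.card_univ, Fintype.card_fin]
        rw [hcv, ← two_mul, hm2]
        congr 1
        omega
      have hlen : M1.toList.length = 2 ^ (n - d) := by
        rw [Multiset.length_toList, hM1card]
      refine ⟨fun c => {M1.toList.get (Fin.cast hlen.symm c)}, ?_, ?_⟩
      · intro c
        apply GR_singleton' hdeq
        intro hget0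
        have hmem : (0 : Fin d → ZMod 2) ∈ M1 := by
          rw [← hget0]
          exact Multiset.mem_toList.mp (List.get_mem _ _)
        rw [hM1, Multiset.mem_add] at hmem
        rcases hmem with hmem | hmem <;>
          · obtain ⟨j, _, hj⟩ := Multiset.mem_map.mp hmem
            exact hu0 j hj
      · rw [sum_singleton_map, Fin.univ_val_map]
        have hofn : List.ofFn (fun c => M1.toList.get (Fin.cast hlen.symm c))
            = M1.toList := by
          apply List.ext_get (by simp [hlen])
          intro i h1 h2
          simp
        rw [hofn, Multiset.coe_toList]
    · have hd2 : 2 ≤ d := by omega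
      have hadd2d : ∀ x : (Fin d → ZMod 2), x + x = 0 := by
        intro x
        funext i
        have hz : ∀ a : ZMod 2, a + a = 0 := by decide
        exact hz (x i)
      have htg : Multiset.card (Finset.univ.val.map u) = 2 ^ (d - 2) * 2 ^ (n - d) := by
        rw [Multiset.card_map, ← Finset.card_def, Finset.card_univ, Fintype.card_fin,
          ← pow_add]
        congr 1
        omega
      have hVb : (Finset.univ.val.map u).toFinset.card ≤ 2 ^ (n - d) := by
        have hsub : (Finset.univ.val.map u).toFinset ⊆ Finset.univ.erase 0 := by
          intro x hx
          refine Finset.mem_erase.mpr ⟨?_, Finset.mem_univ x⟩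
          rintro rfl
          exact h0U (Multiset.mem_toFinset.mp hx)
        refine le_trans (Finset.card_le_card hsub) ?_
        rw [Finset.card_erase_of_mem (Finset.mem_univ 0), Finset.card_univ]
        have hcard : Fintype.card (Fin d → ZMod 2) = 2 ^ d := by
          rw [Fintype.card_fun, ZMod.card, Fintype.card_fin]
        rw [hcard]
        have hle : 2 ^ d ≤ 2 ^ (n - d) := Nat.pow_le_pow_right (by norm_num) (by omega)
        omega
      obtain ⟨B', hB'sum, hB'p⟩ := exists_distribution (2 ^ (d - 2)) Nat.one_le_two_pow
        (2 ^ (n - d)) _ htg hVb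
      have hdd : 2 ^ (d - 2) + 2 ^ (d - 2) = 2 ^ (d - 1) := by
        rw [← two_mul, ← pow_succ']
        congr 1
        omega
      refine ⟨fun c => B' c + B' c, ?_, ?_⟩
      · intro c
        have hcle : B' c ≤ Finset.univ.val.map u := by
          rw [← hB'sum]
          exact Finset.single_le_sum (f := B') (fun i _ => (zero_le : 0 ≤ B' i))
            (Finset.mem_univ c)
        apply GR_of_conj3 (hconj3 d)
        · rw [Multiset.card_add, (hB'p c).1, hdd]
        · intro hmem
          rw [Multiset.mem_add] at hmem
          have : (0 : Fin d → ZMod 2) ∈ Finset.univ.val.map u := by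
            rcases hmem with hmem | hmem <;> exact Multiset.mem_of_le hcle hmem
          exact h0U this
        · rw [Multiset.sum_add]
          exact hadd2d _
        · rw [Multiset.toFinset_add, Finset.union_self]
          exact le_trans (hB'p c).2 (by norm_num)
      · rw [Finset.sum_add_distrib, hB'sum]
  obtain ⟨B, hGRc, hBsum⟩ := hblocks
  -- assemble over the cosets
  have hcardH : 2 ^ (n - d) = Fintype.card (Fin (n - d) → ZMod 2) := by
    rw [Fintype.card_fun, ZMod.card, Fintype.card_fin]
  set eH : Fin (2 ^ (n - d)) ≃ (Fin (n - d) → ZMod 2) :=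
    (finCongr hcardH).trans (Fintype.equivFin _).symm with heH
  have hadd2 : ∀ x : (Fin (n - d) → ZMod 2), x + x = 0 := by
    intro x
    funext i
    have hz : ∀ a : ZMod 2, a + a = 0 := by decide
    exact hz (x i)
  have hGRprod := GR_prod hadd2 (2 ^ (n - d)) (2 ^ (d - 1)) eH B hGRc
  rw [hBsum] at hGRprod
  have hNN : 2 ^ (n - d) * 2 ^ (d - 1) = 2 ^ (n - 1) := by
    rw [← pow_add]
    congr 1
    omega
  have hGRn := (GR.mapEquiv T.symm.toAddEquiv hGRprod).congrN hNN
  have hMfinal : (((Finset.univ.val.map u + Finset.univ.val.map u).map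
        (fun x => (x, (0 : Fin (n - d) → ZMod 2)))).map T.symm.toAddEquiv)
      = Finset.univ.val.map v := by
    rw [← hUU, Multiset.map_map, Multiset.map_map]
    apply Multiset.map_congr rfl
    intro i _
    show T.symm ((w i, 0)) = v i
    rw [← hTv i, T.symm_apply_apply]
  rw [hMfinal] at hGRn
  obtain ⟨p, q, hbij, hmul⟩ := hGRn
  obtain ⟨σ, hσ⟩ := exists_perm_of_map_eq hmul
  refine ⟨p ∘ σ, q ∘ σ, ?_, fun i => hσ i⟩
  show Function.Bijective _
  have hre : Function.Bijective (fun x : Fin (2 ^ (n - 1)) × Bool => ((σ x.1 : Fin (2 ^ (n - 1))), x.2)) :=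
    (Equiv.prodCongr σ (Equiv.refl Bool)).bijective
  exact hbij.comp hre
end
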